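/- arXiv:2410.20504 — 6 statements merged into one kernel-verified Lean document; each statement's English description precedes it below -/
import Mathlib

section
/- Let κ be a regular cardinal and let F : C → D be a functor between categories that admit all filtered colimits. Then F preserves all filtered colimits if and only if F preserves κ-filtered colimits and preserves colimits indexed by κ-small filtered categories. -/
universe u v₁ v₂ u₁ u₂

open CategoryTheory Limits

/-- A category `J` is `κ`-filtered if every diagram indexed by a category with fewer
than `κ` morphisms admits a cocone. -/
def IsKappaFiltered (κ : Cardinal.{u}) (J : Type u) [SmallCategory J] : Prop :=
  ∀ (A : Type u) [SmallCategory A], Cardinal.mk (Arrow A) < κ →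
    ∀ G : A ⥤ J, Nonempty (Cocone G)

/-- A category `J` is `κ`-small if it has fewer than `κ` morphisms. -/
def IsKappaSmall (κ : Cardinal.{u}) (J : Type u) [SmallCategory J] : Prop :=
  Cardinal.mk (Arrow J) < κ

/-!
By Deligne's theorem every filtered category receives a final functor from a directed poset
`α`, so it suffices to treat colimits indexed by `α`. For `κ > ℵ₀` the nonempty directed subsets
of `α` of cardinality `< κ` form a `κ`-directed poset `P` (a subset of size `< κ` is closed under
chosen upper bounds in countably many steps), and the Grothendieck construction of `S ↦ S` over
`P` maps finally onto `α`. A colimit over a Grothendieck construction is the colimit over the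
base of the colimits over the fibers, and `F` preserves both kinds. For `κ = ℵ₀` there is nothing
to prove, since filtered categories are `ℵ₀`-filtered.
-/

universe v₀ u₀ w₁ w₂

open scoped Cardinal

namespace CategoryTheory.Limits

variable {B : Type u₀} [Category.{v₀} B] {Φ : B ⥤ Cat.{w₁, w₂}}
  {C : Type u₁} [Category.{v₁} C] {D : Type u₂} [Category.{v₂} D]

lemma ι_fiberwiseColimit_map [∀ b, HasColimitsOfShape (Φ.obj b) C] (G : Grothendieck Φ ⥤ C)
    {b b' : B} (f : b ⟶ b') (x : Φ.obj b) :
    colimit.ι (Grothendieck.ι Φ b ⋙ G) x ≫ (fiberwiseColimit G).map f =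
      G.map (Grothendieck.Hom.mk (X := ⟨b, x⟩) (Y := ⟨b', (Φ.map f).toFunctor.obj x⟩)
        f (𝟙 _)) ≫
        colimit.ι (Grothendieck.ι Φ b' ⋙ G) ((Φ.map f).toFunctor.obj x) :=
  ((natTransIntoForgetCompFiberwiseColimit G).naturality (X := ⟨b, x⟩)
    (Y := ⟨b', (Φ.map f).toFunctor.obj x⟩) (Grothendieck.Hom.mk f (𝟙 _))).symm

section

variable (F : C ⥤ D) [∀ b, HasColimitsOfShape (Φ.obj b) C]
  [∀ b, HasColimitsOfShape (Φ.obj b) D] [∀ b, PreservesColimitsOfShape (Φ.obj b) F]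
  (G : Grothendieck Φ ⥤ C)

noncomputable def fiberwiseColimitCompIsoApp (b : B) :
    (fiberwiseColimit (G ⋙ F)).obj b ≅ F.obj ((fiberwiseColimit G).obj b) :=
  (colimit.isColimit (Grothendieck.ι Φ b ⋙ G ⋙ F)).coconePointUniqueUpToIso
    (isColimitOfPreserves F (colimit.isColimit (Grothendieck.ι Φ b ⋙ G)))

lemma ι_fiberwiseColimitCompIsoApp_hom (b : B) (x : Φ.obj b) :
    colimit.ι (Grothendieck.ι Φ b ⋙ G ⋙ F) x ≫ (fiberwiseColimitCompIsoApp F G b).hom =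
      F.map (colimit.ι (Grothendieck.ι Φ b ⋙ G) x) :=
  IsColimit.comp_coconePointUniqueUpToIso_hom _ _ x

-- `erw` is needed because `(fiberwiseColimit G).obj b` only unfolds to a `colimit` at default
-- transparency.
noncomputable def fiberwiseColimitCompIso :
    fiberwiseColimit (G ⋙ F) ≅ fiberwiseColimit G ⋙ F :=
  NatIso.ofComponents (fiberwiseColimitCompIsoApp F G) fun f => colimit.hom_ext fun x => by
    erw [← Category.assoc, ι_fiberwiseColimit_map, Category.assoc,
      ι_fiberwiseColimitCompIsoApp_hom, ← Category.assoc, ι_fiberwiseColimitCompIsoApp_hom,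
      ← F.map_comp, ← F.map_comp, ι_fiberwiseColimit_map]
    rfl

variable {F} in
theorem preservesColimitsOfShape_grothendieck [PreservesColimitsOfShape B F] :
    PreservesColimitsOfShape (Grothendieck Φ) F where
  preservesColimit {G} := ⟨fun {c} hc => by
    have hF := isColimitOfPreserves F (isColimitCoconeFiberwiseColimitOfCocone hc)
    have hFG := (IsColimit.precomposeHomEquiv (fiberwiseColimitCompIso F G) _).symm hF
    refine ⟨(isColimitCoconeOfFiberwiseCocone hFG).ofIsoColimit
      (Cocone.ext (Iso.refl _) fun X => ?_)⟩
    show (colimit.ι (Grothendieck.ι Φ X.base ⋙ G ⋙ F) X.fiber ≫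
      (fiberwiseColimitCompIsoApp F G X.base).hom ≫
        F.map (colimit.desc _ (c.whisker (Grothendieck.ι Φ X.base)))) ≫ 𝟙 _ =
      F.map (c.ι.app X)
    erw [Category.comp_id, ← Category.assoc, ι_fiberwiseColimitCompIsoApp_hom, ← F.map_comp,
      colimit.ι_desc]
    rfl⟩

end

end CategoryTheory.Limits

section

variable {κ : Cardinal.{u}} {α : Type u} [Preorder α]

theorem exists_superset_directedOn_hasCardinalLT [Fact κ.IsRegular] [IsDirectedOrder α]
    (hκ : ℵ₀ < κ) {T : Set α} (hT : HasCardinalLT T κ) :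
    ∃ S, T ⊆ S ∧ DirectedOn (· ≤ ·) S ∧ HasCardinalLT S κ := by
  choose ub hub using fun a b : α => exists_ge_ge a b
  let step (U : Set α) : Set α := U ∪ Set.image2 ub U U
  have step_mono : Monotone fun n => step^[n] T :=
    monotone_nat_of_le_succ fun n => by
      rw [Function.iterate_succ_apply']
      exact Set.subset_union_left
  refine ⟨⋃ n, step^[n] T, Set.subset_iUnion (fun n => step^[n] T) 0, ?_, ?_⟩
  · rintro x ⟨_, ⟨m, rfl⟩, hx⟩ y ⟨_, ⟨n, rfl⟩, hy⟩
    refine ⟨ub x y, Set.mem_iUnion.2 ⟨max m n + 1, ?_⟩, hub x y⟩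
    rw [Function.iterate_succ_apply']
    exact Or.inr (Set.mem_image2_of_mem (step_mono (le_max_left m n) hx)
      (step_mono (le_max_right m n) hy))
  · refine hasCardinalLT_iUnion _ (by simpa [HasCardinalLT] using hκ) fun n => ?_
    induction n with
    | zero => exact hT
    | succ n ih =>
      rw [Function.iterate_succ_apply']
      refine hasCardinalLT_union hκ.le ih ?_
      exact (hasCardinalLT_prod hκ.le ih ih).of_surjective
        (fun p => ⟨ub p.1 p.2, Set.mem_image2_of_mem p.1.2 p.2.2⟩)
        (by rintro ⟨_, a, ha, b, hb, rfl⟩; exact ⟨(⟨a, ha⟩, ⟨b, hb⟩), rfl⟩)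

variable (κ α) in
abbrev DirectedSetCardinalLT : Type u :=
  {S : Set α // S.Nonempty ∧ DirectedOn (· ≤ ·) S ∧ HasCardinalLT S κ}

namespace DirectedSetCardinalLT

instance (S : DirectedSetCardinalLT κ α) : IsFiltered S.1 :=
  have := S.2.1.to_subtype
  have := S.2.2.1.isDirectedOrder
  inferInstance

variable (κ α) in
def toCat : DirectedSetCardinalLT κ α ⥤ Cat.{u, u} where
  obj S := Cat.of S.1
  map h := Monotone.functor (f := Set.inclusion (leOfHom h)) (fun _ _ hxy => hxy) |>.toCatHom

variable (κ α) in
def grothendieckProj : Grothendieck (toCat κ α) ⥤ α where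
  obj X := X.fiber.1
  map f := homOfLE (leOfHom f.fiber)

variable [Fact κ.IsRegular]

theorem isKappaSmall (S : DirectedSetCardinalLT κ α) : IsKappaSmall κ S.1 :=
  (hasCardinalLT_iff_cardinal_mk_lt _ _).1 <|
    (hasCardinalLT_prod (Fact.out : κ.IsRegular).aleph0_le S.2.2.2 S.2.2.2).of_injective
      (fun f => (f.left, f.right)) fun _ _ h =>
        Arrow.ext (congrArg Prod.fst h) (congrArg Prod.snd h) (Subsingleton.elim _ _)

theorem final_grothendieckProj [IsFilteredOrEmpty (DirectedSetCardinalLT κ α)] :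
    (grothendieckProj κ α).Final := by
  have (S : DirectedSetCardinalLT κ α) : IsFilteredOrEmpty ((toCat κ α).obj S) :=
    inferInstanceAs (IsFilteredOrEmpty S.1)
  refine Functor.final_of_exists_of_isFiltered _ (fun a => ?_) fun {_ c} _ _ => ⟨c, 𝟙 c, rfl⟩
  exact ⟨⟨⟨{a}, Set.singleton_nonempty a, directedOn_singleton a,
    hasCardinalLT_of_finite _ _ (Fact.out : κ.IsRegular).aleph0_le⟩, ⟨a, rfl⟩⟩, ⟨𝟙 a⟩⟩

variable [IsDirectedOrder α] [Nonempty α]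

theorem exists_superset (hκ : ℵ₀ < κ) {T : Set α} (hT : HasCardinalLT T κ) :
    ∃ S : DirectedSetCardinalLT κ α, T ⊆ S.1 := by
  obtain ⟨a⟩ := ‹Nonempty α›
  obtain ⟨S, hTS, hS, hSκ⟩ := exists_superset_directedOn_hasCardinalLT hκ
    (hasCardinalLT_union (Fact.out : κ.IsRegular).aleph0_le
      (hasCardinalLT_of_finite ({a} : Set α) κ (Fact.out : κ.IsRegular).aleph0_le) hT)
  exact ⟨⟨S, ⟨a, hTS (Or.inl rfl)⟩, hS, hSκ⟩, Set.subset_union_right.trans hTS⟩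

theorem isCardinalFiltered (hκ : ℵ₀ < κ) :
    IsCardinalFiltered (DirectedSetCardinalLT κ α) κ :=
  isCardinalFiltered_preorder _ _ fun K s hK => by
    obtain ⟨S, hS⟩ := exists_superset hκ (hasCardinalLT_iUnion (fun k => (s k).1)
      ((hasCardinalLT_iff_cardinal_mk_lt _ _).2 hK) fun k => (s k).2.2.2)
    exact ⟨S, fun k => (Set.subset_iUnion (fun k => (s k).1) k).trans hS⟩

end DirectedSetCardinalLT

end

theorem isKappaFiltered_of_isCardinalFiltered {κ : Cardinal.{u}} [Fact κ.IsRegular]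
    (J : Type u) [SmallCategory J] [IsCardinalFiltered J κ] : IsKappaFiltered κ J :=
  fun _ _ hA G =>
    IsCardinalFiltered.nonempty_cocone G ((hasCardinalLT_iff_cardinal_mk_lt _ _).2 hA)

open DirectedSetCardinalLT in
theorem preservesColimitsOfShape_of_isDirectedOrder {C : Type u₁} [Category.{v₁} C]
    {D : Type u₂} [Category.{v₂} D] (F : C ⥤ D) {κ : Cardinal.{u}} [Fact κ.IsRegular]
    (hκ : ℵ₀ < κ) (α : Type u) [Preorder α] [IsDirectedOrder α] [Nonempty α]
    [∀ S : DirectedSetCardinalLT κ α, HasColimitsOfShape S.1 C]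
    [∀ S : DirectedSetCardinalLT κ α, HasColimitsOfShape S.1 D]
    [∀ S : DirectedSetCardinalLT κ α, PreservesColimitsOfShape S.1 F]
    [PreservesColimitsOfShape (DirectedSetCardinalLT κ α) F] :
    PreservesColimitsOfShape α F := by
  have := isCardinalFiltered (α := α) hκ
  have := isFiltered_of_isCardinalFiltered (DirectedSetCardinalLT κ α) κ
  have := final_grothendieckProj (κ := κ) (α := α)
  have (S : DirectedSetCardinalLT κ α) : HasColimitsOfShape ((toCat κ α).obj S) C :=
    inferInstanceAs (HasColimitsOfShape S.1 C)
  have (S : DirectedSetCardinalLT κ α) : HasColimitsOfShape ((toCat κ α).obj S) D :=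
    inferInstanceAs (HasColimitsOfShape S.1 D)
  have (S : DirectedSetCardinalLT κ α) : PreservesColimitsOfShape ((toCat κ α).obj S) F :=
    inferInstanceAs (PreservesColimitsOfShape S.1 F)
  have := preservesColimitsOfShape_grothendieck (Φ := toCat κ α) (F := F)
  exact Functor.Final.preservesColimitsOfShape_of_final (grothendieckProj κ α) F

/-- Let `κ` be a regular cardinal and `F : C ⥤ D` a functor between categories admitting
all filtered colimits. Then `F` preserves all filtered colimits if and only if `F`
preserves `κ`-filtered colimits and colimits indexed by `κ`-small filtered categories. -/
theorem stmt3 (κ : Cardinal.{u}) (hκ : κ.IsRegular)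
    {C : Type u₁} [Category.{v₁} C] {D : Type u₂} [Category.{v₂} D]
    (hC : ∀ (J : Type u) [SmallCategory J], IsFiltered J → HasColimitsOfShape J C)
    (hD : ∀ (J : Type u) [SmallCategory J], IsFiltered J → HasColimitsOfShape J D)
    (F : C ⥤ D) :
    (∀ (J : Type u) [SmallCategory J], IsFiltered J →
        Nonempty (PreservesColimitsOfShape J F)) ↔
      ((∀ (J : Type u) [SmallCategory J], IsFiltered J → IsKappaFiltered κ J →
          Nonempty (PreservesColimitsOfShape J F)) ∧
        (∀ (J : Type u) [SmallCategory J], IsFiltered J → IsKappaSmall κ J →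
          Nonempty (PreservesColimitsOfShape J F))) := by
  have : Fact κ.IsRegular := ⟨hκ⟩
  refine ⟨fun h => ⟨fun J _ hJ _ => h J hJ, fun J _ hJ _ => h J hJ⟩,
    fun ⟨hFil, hSmall⟩ J _ hJ => ?_⟩
  rcases hκ.aleph0_le.eq_or_lt with rfl | hκ
  · have := (isCardinalFiltered_aleph0_iff J).2 hJ
    exact hFil J hJ (isKappaFiltered_of_isCardinalFiltered J)
  obtain ⟨α, _, _, _, e, _⟩ := IsFiltered.exists_directed J
  have := DirectedSetCardinalLT.isCardinalFiltered (α := α) hκ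
  have := isFiltered_of_isCardinalFiltered (DirectedSetCardinalLT κ α) κ
  have := (hFil (DirectedSetCardinalLT κ α) inferInstance
    (isKappaFiltered_of_isCardinalFiltered _)).some
  have (S : DirectedSetCardinalLT κ α) := hC S.1 inferInstance
  have (S : DirectedSetCardinalLT κ α) := hD S.1 inferInstance
  have (S : DirectedSetCardinalLT κ α) :=
    (hSmall S.1 inferInstance (DirectedSetCardinalLT.isKappaSmall S)).some
  have := preservesColimitsOfShape_of_isDirectedOrder F hκ α
  exact ⟨Functor.Final.preservesColimitsOfShape_of_final e F⟩
end

section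
/- Let S be a finite set with |S| ≥ 2 and let X : P(S) → C be a functor from the poset of subsets of S to a cocomplete category C. If X is left Kan extended from the full subposet of subsets of cardinality ≤ 1, then for every T ⊆ S and every pair of distinct elements i, j ∈ S \ T, the square formed by X(T) → X(T ∪ {i}), X(T) → X(T ∪ {j}), X(T ∪ {i}) → X(T ∪ {i,j}), X(T ∪ {j}) → X(T ∪ {i,j}) is a pushout square in C. -/
/-!
A strongly cocartesian cube computes `X U` as the colimit of `X V` over the subsets `V ⊆ U` with
`|V| ≤ 1`. Such a `V ⊆ T ∪ {i, j}` lies in `T ∪ {i}` or in `T ∪ {j}`, and if it lies in both it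
lies in `T`, since `i ≠ j`. So a cocone on the face yields a cocone on the diagram computing
`X (T ∪ {i, j})`: each leg factors through whichever side contains `V`, and the two choices agree
over `T` by the commutativity of the cocone. This works for any pointwise left Kan extension into
a preorder and any square `I ≤ A, B ≤ U` with these two covering properties.
-/

open CategoryTheory Limits

theorem Finset.subset_or_subset_of_card_le_one {α : Type*} [DecidableEq α] {s A B : Finset α}
    (hs : s.card ≤ 1) (h : s ⊆ A ∪ B) : s ⊆ A ∨ s ⊆ B := by
  by_contra! hne
  obtain ⟨⟨a, has, haA⟩, ⟨b, hbs, hbB⟩⟩ := And.imp Finset.not_subset.mp Finset.not_subset.mp hne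
  obtain rfl := Finset.card_le_one.mp hs a has b hbs
  simpa [haA, hbB] using h has

namespace CategoryTheory.Functor.LeftExtension

universe v₁ v₂ u₁ u₂ u₃

variable {P : Type u₁} {D : Type u₂} {C : Type u₃} [Category.{v₁} P] [Preorder D]
  [Category.{v₂} C] {L : P ⥤ D} {F : P ⥤ C}
  (E : L.LeftExtension F) {I A B U : D} (hIA : I ≤ A) (hIB : I ≤ B) (hAU : A ≤ U) (hBU : B ≤ U)

section PushoutCocone

variable {E hIA hIB}
variable (s : PushoutCocone (E.right.map (homOfLE hIA)) (E.right.map (homOfLE hIB)))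

theorem hom_app_map_inl_eq_inr (hinf : ∀ p, L.obj p ≤ A → L.obj p ≤ B → L.obj p ≤ I)
    {p : P} (f : L.obj p ⟶ A) (g : L.obj p ⟶ B) :
    E.hom.app p ≫ E.right.map f ≫ s.inl = E.hom.app p ≫ E.right.map g ≫ s.inr := by
  let k : L.obj p ⟶ I := homOfLE (hinf p (leOfHom f) (leOfHom g))
  rw [Subsingleton.elim f (k ≫ homOfLE hIA), Subsingleton.elim g (k ≫ homOfLE hIB)]
  simp only [Functor.map_comp, Category.assoc, s.condition]

open Classical in
noncomputable def pushoutLeg (p : P) (hp : L.obj p ≤ A ∨ L.obj p ≤ B) : F.obj p ⟶ s.pt :=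
  if h : L.obj p ≤ A then E.hom.app p ≫ E.right.map (homOfLE h) ≫ s.inl
  else E.hom.app p ≫ E.right.map (homOfLE (hp.resolve_left h)) ≫ s.inr

theorem pushoutLeg_eq_inl {p : P} (hp : L.obj p ≤ A ∨ L.obj p ≤ B) (f : L.obj p ⟶ A) :
    pushoutLeg s p hp = E.hom.app p ≫ E.right.map f ≫ s.inl := by
  rw [pushoutLeg, dif_pos (leOfHom f)]
  rfl

theorem pushoutLeg_eq_inr (hinf : ∀ p, L.obj p ≤ A → L.obj p ≤ B → L.obj p ≤ I)
    {p : P} (hp : L.obj p ≤ A ∨ L.obj p ≤ B) (g : L.obj p ⟶ B) :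
    pushoutLeg s p hp = E.hom.app p ≫ E.right.map g ≫ s.inr := by
  unfold pushoutLeg
  split_ifs with h
  · exact hom_app_map_inl_eq_inr s hinf _ g
  · rfl

theorem map_pushoutLeg (hinf : ∀ p, L.obj p ≤ A → L.obj p ≤ B → L.obj p ≤ I)
    {p p' : P} (φ : p ⟶ p') (hp : L.obj p ≤ A ∨ L.obj p ≤ B)
    (hp' : L.obj p' ≤ A ∨ L.obj p' ≤ B) :
    F.map φ ≫ pushoutLeg s p' hp' = pushoutLeg s p hp := by
  have hpp' : L.obj p ≤ L.obj p' := leOfHom (L.map φ)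
  rcases hp' with h' | h'
  · rw [pushoutLeg_eq_inl s _ (homOfLE h'), pushoutLeg_eq_inl s _ (homOfLE (hpp'.trans h')),
      E.hom.naturality_assoc]
    simp only [Functor.whiskeringLeft_obj_obj, Functor.comp_map, ← Functor.map_comp_assoc]
    rfl
  · rw [pushoutLeg_eq_inr s hinf _ (homOfLE h'),
      pushoutLeg_eq_inr s hinf _ (homOfLE (hpp'.trans h')), E.hom.naturality_assoc]
    simp only [Functor.whiskeringLeft_obj_obj, Functor.comp_map, ← Functor.map_comp_assoc]
    rfl

variable (hinf : ∀ p, L.obj p ≤ A → L.obj p ≤ B → L.obj p ≤ I)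
  (hsup : ∀ p, L.obj p ≤ U → L.obj p ≤ A ∨ L.obj p ≤ B) (hU : E.IsPointwiseLeftKanExtensionAt U)

noncomputable def pushoutCoconeAt : Cocone (CostructuredArrow.proj L U ⋙ F) where
  pt := s.pt
  ι.app c := pushoutLeg s c.left (hsup _ (leOfHom c.hom))
  ι.naturality _ _ φ := (map_pushoutLeg s hinf φ.left _ _).trans (Category.comp_id _).symm

noncomputable def pushoutDesc : E.right.obj U ⟶ s.pt :=
  hU.desc (pushoutCoconeAt s hinf hsup)

theorem hom_app_map_pushoutDesc {p : P} (φ : L.obj p ⟶ U) :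
    E.hom.app p ≫ E.right.map φ ≫ pushoutDesc s hinf hsup hU =
      pushoutLeg s p (hsup p (leOfHom φ)) :=
  (Category.assoc _ _ _).symm.trans (hU.fac (pushoutCoconeAt s hinf hsup) (.mk φ))

theorem map_pushoutDesc_of_le_left (hA : E.IsPointwiseLeftKanExtensionAt A) :
    E.right.map (homOfLE hAU) ≫ pushoutDesc s hinf hsup hU = s.inl :=
  hA.hom_ext' fun p φ => by
    rw [← Functor.map_comp_assoc, hom_app_map_pushoutDesc, pushoutLeg_eq_inl s _ φ]

theorem map_pushoutDesc_of_le_right (hB : E.IsPointwiseLeftKanExtensionAt B) :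
    E.right.map (homOfLE hBU) ≫ pushoutDesc s hinf hsup hU = s.inr :=
  hB.hom_ext' fun p φ => by
    rw [← Functor.map_comp_assoc, hom_app_map_pushoutDesc,
      pushoutLeg_eq_inr s hinf _ φ]

end PushoutCocone

theorem hom_ext_of_isPointwiseLeftKanExtensionAt
    (hsup : ∀ p, L.obj p ≤ U → L.obj p ≤ A ∨ L.obj p ≤ B) (hU : E.IsPointwiseLeftKanExtensionAt U)
    {T : C} {f g : E.right.obj U ⟶ T}
    (hfA : E.right.map (homOfLE hAU) ≫ f = E.right.map (homOfLE hAU) ≫ g)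
    (hfB : E.right.map (homOfLE hBU) ≫ f = E.right.map (homOfLE hBU) ≫ g) : f = g := by
  refine hU.hom_ext' fun p φ => ?_
  rcases hsup p (leOfHom φ) with h | h
  · rw [Subsingleton.elim φ (homOfLE h ≫ homOfLE hAU), Functor.map_comp_assoc,
      Functor.map_comp_assoc, hfA]
  · rw [Subsingleton.elim φ (homOfLE h ≫ homOfLE hBU), Functor.map_comp_assoc,
      Functor.map_comp_assoc, hfB]

theorem isPushout_of_isPointwiseLeftKanExtensionAt
    (hinf : ∀ p, L.obj p ≤ A → L.obj p ≤ B → L.obj p ≤ I)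
    (hsup : ∀ p, L.obj p ≤ U → L.obj p ≤ A ∨ L.obj p ≤ B)
    (hA : E.IsPointwiseLeftKanExtensionAt A) (hB : E.IsPointwiseLeftKanExtensionAt B)
    (hU : E.IsPointwiseLeftKanExtensionAt U) :
    IsPushout (E.right.map (homOfLE hIA)) (E.right.map (homOfLE hIB))
      (E.right.map (homOfLE hAU)) (E.right.map (homOfLE hBU)) := by
  have comm : E.right.map (homOfLE hIA) ≫ E.right.map (homOfLE hAU) =
      E.right.map (homOfLE hIB) ≫ E.right.map (homOfLE hBU) := by
    simp only [← Functor.map_comp]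
    rfl
  refine IsPushout.of_isColimit' ⟨comm⟩ (PushoutCocone.IsColimit.mk comm
    (fun s => pushoutDesc s hinf hsup hU)
    (fun s => map_pushoutDesc_of_le_left hAU s hinf hsup hU hA)
    (fun s => map_pushoutDesc_of_le_right hBU s hinf hsup hU hB)
    fun s m hml hmr => E.hom_ext_of_isPointwiseLeftKanExtensionAt hAU hBU hsup hU ?_ ?_)
  · exact hml.trans (map_pushoutDesc_of_le_left hAU s hinf hsup hU hA).symm
  · exact hmr.trans (map_pushoutDesc_of_le_right hBU s hinf hsup hU hB).symm

end CategoryTheory.Functor.LeftExtension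

/-- If a cube `X : P(S) ⥤ C` (with `|S| ≥ 2`, `C` cocomplete) is left Kan extended from the
subposet of subsets of cardinality ≤ 1 (i.e. is strongly cocartesian), then every
2-dimensional face is a pushout square. -/
theorem stmt4 {S : Type} [DecidableEq S]
    {C : Type*} [Category C] [HasColimits C]
    (X : Finset S ⥤ C)
    (hX : X.IsLeftKanExtension
      (𝟙 (ObjectProperty.ι (fun T : Finset S => T.card ≤ 1) ⋙ X)))
    (T : Finset S) (i j : S) (hij : i ≠ j) :
    IsPushout
      (X.map (homOfLE (Finset.subset_insert i T)))
      (X.map (homOfLE (Finset.subset_insert j T)))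
      (X.map (homOfLE (Finset.subset_insert j (insert i T))))
      (X.map (homOfLE (by
        intro a ha
        simp only [Finset.mem_insert] at ha ⊢
        tauto))) := by
  have hE := Functor.isPointwiseLeftKanExtensionOfIsLeftKanExtension X
    (𝟙 (ObjectProperty.ι (fun T : Finset S => T.card ≤ 1) ⋙ X))
  refine Functor.LeftExtension.isPushout_of_isPointwiseLeftKanExtensionAt _ _ _ _ _
    (fun p hpi hpj a ha => ?_) (fun p hp => ?_) (hE _) (hE _) (hE _)
  · obtain rfl | haT := Finset.mem_insert.mp (hpi ha)
    · exact (Finset.mem_insert.mp (hpj ha)).resolve_left hij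
    · exact haT
  · exact Finset.subset_or_subset_of_card_le_one p.property <| hp.trans <|
      Finset.insert_subset (Finset.mem_union_right _ (Finset.mem_insert_self j T))
        Finset.subset_union_left
end

section
/- Fix k ≥ 0. The functor from the poset of nonempty subsets of {0, 1, ..., k} (ordered by inclusion) to the full subcategory 𝚫_{≤k} of the simplex category spanned by the objects [0], ..., [k], sending a nonempty subset S ⊆ {0,...,k} to the linearly ordered set S (regarded as an object of 𝚫_{≤k} via its unique order-isomorphism with some [m], m ≤ k), and an inclusion S ⊆ T to the corresponding order-preserving injection, is an initial functor. -/
open CategoryTheory Limits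

/-- The poset of nonempty subsets of `{0, 1, ..., k}`. -/
abbrev NonemptySubsets (k : ℕ) := {S : Finset (Fin (k + 1)) // S.Nonempty}

/-- The functor from the poset of nonempty subsets of `{0, ..., k}` to the truncated
simplex category `𝚫_{≤ k}`, sending a nonempty subset `S` to the linearly ordered set `S`
(identified with `[|S| - 1]` via its unique order isomorphism) and an inclusion `S ⊆ T`
to the corresponding order-preserving injection. -/
noncomputable def subsetsToTruncated (k : ℕ) :
    NonemptySubsets k ⥤ SimplexCategory.Truncated k where
  obj S := ⟨SimplexCategory.mk (S.1.card - 1), by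
    have h1 := Finset.card_le_univ S.1
    simp only [Finset.card_univ, Fintype.card_fin] at h1
    simp only [SimplexCategory.len_mk]
    omega⟩
  map {S T} φ := ObjectProperty.homMk <| SimplexCategory.mkHom
    (((Fin.castOrderIso (Nat.succ_pred_eq_of_pos T.2.card_pos).symm).toOrderEmbedding.toOrderHom).comp
      (((T.1.orderIsoOfFin rfl).symm.toOrderEmbedding.toOrderHom).comp
        ((OrderHom.mk (fun x : {a // a ∈ S.1} => (⟨x.1, leOfHom φ x.2⟩ : {a // a ∈ T.1}))
            (fun _ _ h => h)).comp
          (((S.1.orderIsoOfFin rfl).toOrderEmbedding.toOrderHom).comp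
            ((Fin.castOrderIso (Nat.succ_pred_eq_of_pos S.2.card_pos)).toOrderEmbedding.toOrderHom)))))
  map_id := by
    intro S
    apply SimplexCategory.Truncated.Hom.ext
    rw [CategoryTheory.ObjectProperty.FullSubcategory.id_hom, SimplexCategory.id_toOrderHom]
    ext i
    simp [SimplexCategory.mkHom]
  map_comp := by
    intro S T U φ ψ
    apply SimplexCategory.Truncated.Hom.ext
    rw [CategoryTheory.ObjectProperty.FullSubcategory.comp_hom, SimplexCategory.comp_toOrderHom]
    ext i
    simp only [SimplexCategory.mkHom, SimplexCategory.Hom.toOrderHom_mk,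
      OrderHom.comp_coe, Function.comp_apply, OrderEmbedding.toOrderHom_coe,
      OrderIso.coe_toOrderEmbedding, OrderHom.coe_mk, Fin.castOrderIso_apply]
    simp [Fin.cast_cast, OrderIso.apply_symm_apply]
    rfl

/-! A morphism from the image of `S` to `[n]` is just a monotone map `S → [n]`, and restricting
such a map along an inclusion `S ⊆ T` is a morphism of the comma category; write `(S, g)` for
its objects `arrow d S g`. Restricting to a point connects every `(S, g)` to some `({a}, v)`; the
constant map `v` on all of `{0, …, k}` connects the points with value `v`; and, since
`v ≤ n ≤ k`, the monotone map `i ↦ min i v` on `{0, …, k}` connects `({v}, v)` to `({0}, 0)`. -/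

namespace subsetsToTruncated

variable {k : ℕ} (d : SimplexCategory.Truncated k)

noncomputable def homOfOrderHom (S : NonemptySubsets k)
    (g : {a : Fin (k + 1) // a ∈ S.1} →o Fin (d.1.len + 1)) :
    (subsetsToTruncated k).obj S ⟶ d :=
  ObjectProperty.homMk <| SimplexCategory.Hom.mk
    ⟨fun i => g (S.1.orderIsoOfFin rfl (Fin.cast (Nat.succ_pred_eq_of_pos S.2.card_pos) i)),
     fun _ _ h => g.mono ((S.1.orderIsoOfFin rfl).monotone (by exact h))⟩

theorem exists_homOfOrderHom_eq (S : NonemptySubsets k) (f : (subsetsToTruncated k).obj S ⟶ d) :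
    ∃ g, homOfOrderHom d S g = f := by
  refine ⟨⟨fun x => f.hom.toOrderHom
      (Fin.cast (Nat.succ_pred_eq_of_pos S.2.card_pos).symm ((S.1.orderIsoOfFin rfl).symm x)),
    fun _ _ h => f.hom.toOrderHom.mono (by exact (S.1.orderIsoOfFin rfl).symm.monotone h)⟩, ?_⟩
  apply SimplexCategory.Truncated.Hom.ext
  ext i
  change (f.hom.toOrderHom (Fin.cast _ ((S.1.orderIsoOfFin rfl).symm
    (S.1.orderIsoOfFin rfl (Fin.cast _ i))))).1 = _
  rw [OrderIso.symm_apply_apply]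
  rfl

theorem map_homOfLE_comp_homOfOrderHom {S T : NonemptySubsets k} (h : S.1 ⊆ T.1)
    (f : {a : Fin (k + 1) // a ∈ S.1} →o Fin (d.1.len + 1))
    (g : {a : Fin (k + 1) // a ∈ T.1} →o Fin (d.1.len + 1))
    (hfg : ∀ x, f x = g ⟨x.1, h x.2⟩) :
    (subsetsToTruncated k).map (homOfLE h) ≫ homOfOrderHom d T g = homOfOrderHom d S f := by
  apply SimplexCategory.Truncated.Hom.ext
  ext i
  rw [ObjectProperty.FullSubcategory.comp_hom, SimplexCategory.comp_toOrderHom]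
  change (g ((T.1.orderIsoOfFin rfl) ((T.1.orderIsoOfFin rfl).symm _))).1 = _
  rw [OrderIso.apply_symm_apply]
  exact congrArg Fin.val (hfg _).symm

noncomputable abbrev arrow (S : NonemptySubsets k)
    (g : {a : Fin (k + 1) // a ∈ S.1} →o Fin (d.1.len + 1)) :
    CostructuredArrow (subsetsToTruncated k) d :=
  CostructuredArrow.mk (homOfOrderHom d S g)

theorem zigzag_arrow_of_subset {S T : NonemptySubsets k} (h : S.1 ⊆ T.1)
    (f : {a : Fin (k + 1) // a ∈ S.1} →o Fin (d.1.len + 1))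
    (g : {a : Fin (k + 1) // a ∈ T.1} →o Fin (d.1.len + 1))
    (hfg : ∀ x, f x = g ⟨x.1, h x.2⟩) :
    Zigzag (arrow d S f) (arrow d T g) :=
  Zigzag.of_hom <| CostructuredArrow.homMk (homOfLE h) <|
    map_homOfLE_comp_homOfOrderHom d h f g hfg

noncomputable abbrev pointArrow (a : Fin (k + 1)) (v : Fin (d.1.len + 1)) :
    CostructuredArrow (subsetsToTruncated k) d :=
  arrow d ⟨{a}, Finset.singleton_nonempty a⟩ (OrderHom.const _ v)

theorem zigzag_pointArrow_of_mem (T : NonemptySubsets k)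
    (g : {a : Fin (k + 1) // a ∈ T.1} →o Fin (d.1.len + 1)) {a : Fin (k + 1)} (ha : a ∈ T.1) :
    Zigzag (pointArrow d a (g ⟨a, ha⟩)) (arrow d T g) :=
  zigzag_arrow_of_subset d (Finset.singleton_subset_iff.mpr ha) _ g fun ⟨x, hx⟩ => by
    obtain rfl := Finset.mem_singleton.mp hx
    rfl

theorem zigzag_pointArrow_of_mem_of_mem (T : NonemptySubsets k)
    (g : {a : Fin (k + 1) // a ∈ T.1} →o Fin (d.1.len + 1)) {a b : Fin (k + 1)} (ha : a ∈ T.1)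
    (hb : b ∈ T.1) {v w : Fin (d.1.len + 1)} (hv : g ⟨a, ha⟩ = v) (hw : g ⟨b, hb⟩ = w) :
    Zigzag (pointArrow d a v) (pointArrow d b w) := by
  subst hv hw
  exact (zigzag_pointArrow_of_mem d T g ha).trans (zigzag_pointArrow_of_mem d T g hb).symm

theorem zigzag_pointArrow_zero (a : Fin (k + 1)) (v : Fin (d.1.len + 1)) :
    Zigzag (pointArrow d a v) (pointArrow d 0 0) := by
  have hvk : v.1 < k + 1 := by have := d.2; omega
  let univ : NonemptySubsets k := ⟨Finset.univ, Finset.univ_nonempty⟩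
  let ramp : {i : Fin (k + 1) // i ∈ univ.1} →o Fin (d.1.len + 1) :=
    ⟨fun i => ⟨min i.1.1 v.1, by omega⟩, fun _ _ hij => min_le_min_right v.1 hij⟩
  have to_v : Zigzag (pointArrow d a v) (pointArrow d ⟨v.1, hvk⟩ v) :=
    zigzag_pointArrow_of_mem_of_mem d univ (OrderHom.const _ v) (Finset.mem_univ _)
      (Finset.mem_univ _) rfl rfl
  have v_to_zero : Zigzag (pointArrow d ⟨v.1, hvk⟩ v) (pointArrow d 0 0) :=
    zigzag_pointArrow_of_mem_of_mem d univ ramp (Finset.mem_univ _) (Finset.mem_univ _)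
      (Fin.ext (min_self _)) (Fin.ext (Nat.zero_min _))
  exact to_v.trans v_to_zero

theorem zigzag_pointArrow_zero_of_costructuredArrow
    (X : CostructuredArrow (subsetsToTruncated k) d) :
    Zigzag X (pointArrow d 0 0) := by
  obtain ⟨g, hg⟩ := exists_homOfOrderHom_eq d X.left X.hom
  obtain ⟨a, ha⟩ := X.left.2
  have hX : X = arrow d X.left g := by rw [arrow, hg]; exact CostructuredArrow.eq_mk X
  rw [hX]
  exact (zigzag_pointArrow_of_mem d X.left g ha).symm.trans (zigzag_pointArrow_zero d a _)

end subsetsToTruncated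

/-- The functor sending a nonempty subset `S ⊆ {0, ..., k}` to the linearly ordered set `S`
is an initial functor into the truncated simplex category `𝚫_{≤ k}`. -/
theorem stmt9 (k : ℕ) : (subsetsToTruncated k).Initial := by
  refine ⟨fun d => ?_⟩
  have : Nonempty (CostructuredArrow (subsetsToTruncated k) d) :=
    ⟨subsetsToTruncated.pointArrow d 0 0⟩
  exact zigzag_isConnected fun X Y =>
    (subsetsToTruncated.zigzag_pointArrow_zero_of_costructuredArrow d X).trans
      (subsetsToTruncated.zigzag_pointArrow_zero_of_costructuredArrow d Y).symm
end

section
/- Let F : Type → Type be the analytic functor associated to a species A (a functor from the groupoid of finite sets and bijections to Type), given by F_A(X) = Σ_{n} (A(n) × X^n) / Σ_n, the colimit over the groupoid of finite sets of A(I) × X^I. Then for two species A and B with B(∅) empty, the analytic functor of the composition species (A ∘ B)(I) = Σ over partitions E of I of A(E) × Π_{J ∈ E} B(J) satisfies F_{A∘B} ≅ F_A ∘ F_B. -/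
universe u

open CategoryTheory

/-- A species: a functor from the groupoid of finite sets and bijections to types. -/
abbrev Species := Core FintypeCat.{u} ⥤ Type u

/-- The relation identifying `(a, v) ∈ A(n) × Xⁿ` with its translates under bijections.
Its quotient is the analytic functor `F_A(X) = Σ_n (A(n) × Xⁿ)/Σ_n`, i.e. the colimit
over the groupoid of finite sets of `A(I) × X^I` (computed on the skeleton). -/
def analyticRel (A : Species.{u}) (X : Type u)
    (p q : Σ n : ℕ, A.obj ⟨FintypeCat.of (ULift.{u} (Fin n))⟩ × (ULift.{u} (Fin n) → X)) :
    Prop :=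
  ∃ e : ULift.{u} (Fin p.1) ≃ ULift.{u} (Fin q.1),
    A.map ⟨FintypeCat.equivEquivIso e⟩ p.2.1 = q.2.1 ∧ p.2.2 = fun i => q.2.2 (e i)

/-- The analytic functor associated to a species. -/
def Fanalytic (A : Species.{u}) (X : Type u) : Type u :=
  Quot (analyticRel A X)

/-- The value of the composition species `(A ∘ B)(I) = Σ_{partitions E of I} A(E) × Π_{J ∈ E} B(J)`
on a finite set `I`; partitions of `I` are encoded as setoids (equivalence relations) on `I`,
with set of blocks the quotient `Quotient s` and blocks the fibers of `Quotient.mk s`. -/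
noncomputable def compObj (A B : Species.{u}) (I : FintypeCat.{u}) : Type u :=
  Σ s : Setoid I,
    A.obj ⟨@FintypeCat.of (Quotient s) inferInstance⟩ ×
      ∀ c : Quotient s,
        B.obj ⟨@FintypeCat.of {i : I // Quotient.mk s i = c} inferInstance⟩

/-- The relation on `Σ_n (A ∘ B)(n) × Xⁿ` identifying tuples under bijections of finite
sets (compatibly with the partition, the `A`-label on blocks and the `B`-labels). -/
noncomputable def compAnalyticRel (A B : Species.{u}) (X : Type u)
    (p q : Σ n : ℕ, compObj A B (FintypeCat.of (ULift.{u} (Fin n))) × (ULift.{u} (Fin n) → X)) :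
    Prop :=
  ∃ (e : ULift.{u} (Fin p.1) ≃ ULift.{u} (Fin q.1))
    (h : ∀ a b, p.2.1.1 a b ↔ q.2.1.1 (e a) (e b)),
    A.map ⟨FintypeCat.equivEquivIso (Quotient.congr e h)⟩ p.2.1.2.1 = q.2.1.2.1 ∧
    (∀ c, B.map ⟨FintypeCat.equivEquivIso (Equiv.subtypeEquiv e (fun i =>
        ⟨fun hp => by subst hp; rfl,
         fun hq => (Quotient.congr e h).injective hq⟩))⟩
        (p.2.1.2.2 c) = q.2.1.2.2 (Quotient.congr e h c)) ∧
    p.2.2 = fun i => q.2.2 (e i)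

/-- The analytic functor of the composition species `A ∘ B`. -/
noncomputable def FanalyticComp (A B : Species.{u}) (X : Type u) : Type u :=
  Quot (compAnalyticRel A B X)

/-! Grouping a decorated set `(I, s, a ∈ A(I/s), (b_c ∈ B(c))_c, x : I → X)` by the blocks of
the partition `s` gives the element `[I/s, a, c ↦ [c, b_c, x|c]]` of `F_A(F_B(X))`; this is
compatible with relabelling and the resulting map `F_{A∘B}(X) → F_A(F_B(X))` is bijective.
For injectivity, a bijection of block sets together with bijections between corresponding blocks
glue, through `I ≃ Σ c, c`, to a bijection of the underlying sets. For surjectivity, an element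
`[J, a, j ↦ [K_j, b_j, x_j]]` comes from `I = Σ j, K_j` partitioned by the first coordinate:
its blocks are the `K_j`, and its set of blocks is `J` because every `K_j` is nonempty, which is
where `B(∅) = ∅` is needed. -/

namespace Species

variable (A : Species.{u})

def transport {I J : FintypeCat.{u}} (e : I ≃ J) : A.obj ⟨I⟩ → A.obj ⟨J⟩ :=
  A.map ⟨FintypeCat.equivEquivIso e⟩

@[simp]
lemma transport_refl {I : FintypeCat.{u}} (a : A.obj ⟨I⟩) : A.transport (Equiv.refl I) a = a :=
  Functor.map_id_apply A (⟨I⟩ : Core FintypeCat.{u}) a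

lemma transport_transport {I J K : FintypeCat.{u}} (e : I ≃ J) (f : J ≃ K) (a : A.obj ⟨I⟩) :
    A.transport f (A.transport e a) = A.transport (e.trans f) a :=
  (Functor.map_comp_apply A (X := ⟨I⟩) (Y := ⟨J⟩) (Z := ⟨K⟩)
    ⟨FintypeCat.equivEquivIso e⟩ ⟨FintypeCat.equivEquivIso f⟩ a).symm

@[simp]
lemma transport_symm_transport {I J : FintypeCat.{u}} (e : I ≃ J) (a : A.obj ⟨I⟩) :
    A.transport e.symm (A.transport e a) = a := by
  rw [transport_transport, Equiv.self_trans_symm, transport_refl]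

@[simp]
lemma transport_transport_symm {I J : FintypeCat.{u}} (e : I ≃ J) (a : A.obj ⟨J⟩) :
    A.transport e (A.transport e.symm a) = a := by
  simpa using A.transport_symm_transport e.symm a

lemma transport_eq_of_forall_val_eq {I : FintypeCat.{u}} {γ : Type u} (π : I → γ)
    (β : ∀ c, A.obj ⟨FintypeCat.of {i : I // π i = c}⟩) {c₁ c₂ : γ} (hc : c₁ = c₂)
    (f : {i : I // π i = c₁} ≃ {i : I // π i = c₂}) (hf : ∀ v, (f v).1 = v.1) :
    A.transport (I := FintypeCat.of _) (J := FintypeCat.of _) f (β c₁) = β c₂ := by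
  subst hc
  obtain rfl : f = Equiv.refl _ := Equiv.ext fun v => Subtype.ext (hf v)
  exact A.transport_refl _

lemma nonempty_of_isEmpty_empty (hA : IsEmpty (A.obj ⟨FintypeCat.of PEmpty.{u + 1}⟩))
    {I : FintypeCat.{u}} (a : A.obj ⟨I⟩) : Nonempty I := by
  by_contra hI
  rw [not_nonempty_iff] at hI
  exact hA.false (A.transport (J := FintypeCat.of PEmpty) (Equiv.equivPEmpty I) a)

end Species

noncomputable def FintypeCat.equivFin (I : FintypeCat.{u}) :
    I ≃ FintypeCat.of (ULift.{u} (Fin (Nat.card I))) :=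
  (Finite.equivFin I).trans Equiv.ulift.symm

namespace Fanalytic

variable (A : Species.{u}) {X : Type u}

noncomputable def mk (I : FintypeCat.{u}) (a : A.obj ⟨I⟩) (x : I → X) : Fanalytic A X :=
  Quot.mk _ ⟨Nat.card I, A.transport I.equivFin a, x ∘ I.equivFin.symm⟩

lemma analyticRel_equivalence : Equivalence (analyticRel A X) where
  refl p := ⟨Equiv.refl _, A.transport_refl _, rfl⟩
  symm := fun ⟨e, ha, hx⟩ => ⟨e.symm, by
    rw [← ha]; exact A.transport_symm_transport (I := FintypeCat.of _) (J := FintypeCat.of _) e _,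
    by rw [hx]; funext i; simp⟩
  trans := fun ⟨e, ha, hx⟩ ⟨f, hb, hy⟩ => ⟨e.trans f, by
    rw [← hb, ← ha]
    exact (A.transport_transport (I := FintypeCat.of _) (J := FintypeCat.of _)
      (K := FintypeCat.of _) e f _).symm,
    by rw [hx, hy]; rfl⟩

lemma quot_mk_eq_mk (p : Σ n : ℕ, A.obj ⟨FintypeCat.of (ULift.{u} (Fin n))⟩ ×
    (ULift.{u} (Fin n) → X)) :
    Quot.mk _ p = mk A (FintypeCat.of (ULift.{u} (Fin p.1))) p.2.1 p.2.2 :=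
  Quot.sound ⟨(FintypeCat.of (ULift.{u} (Fin p.1))).equivFin, rfl, by funext i; simp⟩

lemma exists_eq_mk (t : Fanalytic A X) : ∃ I a x, t = mk A I a x := by
  obtain ⟨p, rfl⟩ := Quot.exists_rep t
  exact ⟨_, _, _, quot_mk_eq_mk A p⟩

lemma mk_eq_mk_iff {I J : FintypeCat.{u}} {a : A.obj ⟨I⟩} {b : A.obj ⟨J⟩} {x : I → X}
    {y : J → X} : mk A I a x = mk A J b y ↔ ∃ e : I ≃ J, A.transport e a = b ∧ x = y ∘ e := by
  refine ((analyticRel_equivalence A).quot_mk_eq_iff _ _).trans ?_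
  constructor
  · rintro ⟨e, ha, hx⟩
    change FintypeCat.of _ ≃ FintypeCat.of _ at e
    refine ⟨I.equivFin.trans (e.trans J.equivFin.symm), ?_, ?_⟩
    · rw [← A.transport_transport, ← A.transport_transport]
      exact (congrArg _ ha).trans (A.transport_symm_transport _ _)
    · funext i
      simpa using congrFun hx (I.equivFin i)
  · rintro ⟨e, rfl, rfl⟩
    refine ⟨I.equivFin.symm.trans (e.trans J.equivFin), ?_, ?_⟩
    · show A.transport _ (A.transport I.equivFin a) = A.transport J.equivFin (A.transport e a)
      rw [A.transport_transport, A.transport_transport, ← Equiv.trans_assoc,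
        Equiv.self_trans_symm, Equiv.refl_trans]
    · funext i
      simp

end Fanalytic

namespace FanalyticComp

variable (A B : Species.{u}) {X : Type u}

noncomputable def groupByBlocks {I : FintypeCat.{u}} (s : Setoid I)
    (a : A.obj ⟨FintypeCat.of (Quotient s)⟩)
    (b : ∀ c : Quotient s, B.obj ⟨FintypeCat.of {i : I // Quotient.mk s i = c}⟩) (x : I → X) :
    Fanalytic A (Fanalytic B X) :=
  Fanalytic.mk A (FintypeCat.of (Quotient s)) a fun c =>
    Fanalytic.mk B (FintypeCat.of {i : I // Quotient.mk s i = c}) (b c) fun i => x i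

variable {A B} in
lemma groupByBlocks_eq_of_compAnalyticRel {p q : Σ n : ℕ,
      compObj A B (FintypeCat.of (ULift.{u} (Fin n))) × (ULift.{u} (Fin n) → X)}
    (h : compAnalyticRel A B X p q) :
    groupByBlocks A B p.2.1.1 p.2.1.2.1 p.2.1.2.2 p.2.2 =
      groupByBlocks A B q.2.1.1 q.2.1.2.1 q.2.1.2.2 q.2.2 := by
  obtain ⟨e, hs, ha, hb, hx⟩ := h
  refine (Fanalytic.mk_eq_mk_iff A).mpr ⟨Quotient.congr e hs, ha, funext fun c => ?_⟩
  refine (Fanalytic.mk_eq_mk_iff B).mpr ⟨_, hb c, ?_⟩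
  rw [hx]
  rfl

noncomputable def toComp : FanalyticComp A B X → Fanalytic A (Fanalytic B X) :=
  Quot.lift (fun p => groupByBlocks A B p.2.1.1 p.2.1.2.1 p.2.1.2.2 p.2.2)
    fun _ _ => groupByBlocks_eq_of_compAnalyticRel

lemma exists_toComp_eq_groupByBlocks {I : FintypeCat.{u}} (s : Setoid I)
    (a : A.obj ⟨FintypeCat.of (Quotient s)⟩)
    (b : ∀ c : Quotient s, B.obj ⟨FintypeCat.of {i : I // Quotient.mk s i = c}⟩) (x : I → X) :
    ∃ z : FanalyticComp A B X, toComp A B z = groupByBlocks A B s a b x := by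
  let e := I.equivFin
  let s' : Setoid (ULift.{u} (Fin (Nat.card I))) := s.comap e.symm
  let Q : Quotient s' ≃ Quotient s := Quotient.congr e.symm fun _ _ => Iff.rfl
  let fe : ∀ c', {j // Quotient.mk s' j = c'} ≃ {i : I // Quotient.mk s i = Q c'} := fun c' =>
    Equiv.subtypeEquiv e.symm fun j => (Q.apply_eq_iff_eq (x := Quotient.mk s' j)).symm
  let a' := A.transport (I := FintypeCat.of _) (J := FintypeCat.of (Quotient s')) Q.symm a
  let b' := fun c' =>
    B.transport (I := FintypeCat.of _) (J := FintypeCat.of _) (fe c').symm (b (Q c'))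
  refine ⟨Quot.mk _ ⟨Nat.card I, ⟨s', a', b'⟩, x ∘ e.symm⟩, ?_⟩
  refine (Fanalytic.mk_eq_mk_iff A).mpr ⟨Q, A.transport_transport_symm _ _, funext fun c' => ?_⟩
  exact (Fanalytic.mk_eq_mk_iff B).mpr ⟨fe c', B.transport_transport_symm _ _, rfl⟩

variable {A B} in
lemma compAnalyticRel_of_groupByBlocks_eq {p q : Σ n : ℕ,
      compObj A B (FintypeCat.of (ULift.{u} (Fin n))) × (ULift.{u} (Fin n) → X)}
    (h : groupByBlocks A B p.2.1.1 p.2.1.2.1 p.2.1.2.2 p.2.2 =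
      groupByBlocks A B q.2.1.1 q.2.1.2.1 q.2.1.2.2 q.2.2) :
    compAnalyticRel A B X p q := by
  obtain ⟨n, ⟨s, a, b⟩, x⟩ := p
  obtain ⟨n', ⟨s', a', b'⟩, x'⟩ := q
  dsimp only at h ⊢
  obtain ⟨E, hA, hF⟩ := (Fanalytic.mk_eq_mk_iff A).mp h
  choose d hdb hdx using fun c => (Fanalytic.mk_eq_mk_iff B).mp (congrFun hF c)
  let e := ((Equiv.sigmaFiberEquiv (Quotient.mk s)).symm.trans (Equiv.sigmaCongr E d)).trans
    (Equiv.sigmaFiberEquiv (Quotient.mk s'))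
  have he : ∀ c (v : {i // Quotient.mk s i = c}), e v.1 = (d c v).1 := by
    rintro _ ⟨i, rfl⟩; rfl
  have hmk : ∀ i, Quotient.mk s' (e i) = E (Quotient.mk s i) := fun i => (d _ ⟨i, rfl⟩).2
  have hs : ∀ i₁ i₂, s i₁ i₂ ↔ s' (e i₁) (e i₂) := fun i₁ i₂ => by
    rw [← Quotient.eq, ← Quotient.eq, hmk, hmk, E.apply_eq_iff_eq]
  have hQ : Quotient.congr e hs = E := Equiv.ext fun c => Quotient.inductionOn c hmk
  refine ⟨e, hs, ?_, fun c => ?_, funext fun i => congrFun (hdx _) ⟨i, rfl⟩⟩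
  · rw [hQ]; exact hA
  · dsimp only
    have hb : b c = B.transport (I := FintypeCat.of _) (J := FintypeCat.of _) (d c).symm
        (b' (E c)) := by
      rw [← hdb c, B.transport_symm_transport]
    rw [hb]
    refine (B.transport_transport _ _ _).trans ?_
    exact B.transport_eq_of_forall_val_eq _ b' (by rw [hQ]) _ fun w =>
      (he c _).trans (congrArg Subtype.val ((d c).apply_symm_apply w))

lemma toComp_injective : Function.Injective (toComp A B (X := X)) := by
  rintro ⟨p⟩ ⟨q⟩ h
  exact Quot.sound (compAnalyticRel_of_groupByBlocks_eq h)

lemma toComp_surjective (hB : IsEmpty (B.obj ⟨FintypeCat.of PEmpty.{u + 1}⟩)) :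
    Function.Surjective (toComp A B (X := X)) := by
  intro t
  obtain ⟨J, a, f, rfl⟩ := Fanalytic.exists_eq_mk A t
  choose K b x hf using fun j => Fanalytic.exists_eq_mk B (f j)
  let I := FintypeCat.of (Σ j, K j)
  have hfst : Function.Surjective (Sigma.fst : I → J) := fun j =>
    ⟨⟨j, (B.nonempty_of_isEmpty_empty hB (b j)).some⟩, rfl⟩
  let s : Setoid I := Setoid.ker Sigma.fst
  let Q : Quotient s ≃ J := Setoid.quotientKerEquivOfSurjective _ hfst
  let fe : ∀ c, {z : I // Quotient.mk s z = c} ≃ K (Q c) := fun c =>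
    (Equiv.subtypeEquivRight fun z => ⟨by rintro rfl; rfl, fun h => Q.injective h⟩).trans
      (Equiv.sigmaSubtype (Q c))
  obtain ⟨z, hz⟩ := exists_toComp_eq_groupByBlocks A B s
    (A.transport (I := J) (J := FintypeCat.of _) Q.symm a)
    (fun c => B.transport (I := K (Q c)) (J := FintypeCat.of _) (fe c).symm (b (Q c)))
    (fun w : Σ j, K j => x w.1 w.2)
  refine ⟨z, hz.trans ((Fanalytic.mk_eq_mk_iff A).mpr
    ⟨Q, A.transport_transport_symm _ _, funext fun c => ?_⟩)⟩
  rw [Function.comp_apply, hf]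
  refine (Fanalytic.mk_eq_mk_iff B).mpr ⟨fe c, B.transport_transport_symm _ _, ?_⟩
  funext ⟨⟨j, k⟩, hc⟩
  subst hc
  rfl

end FanalyticComp

/-- Joyal's theorem: if `B(∅)` is empty, the analytic functor of the composition species
`A ∘ B` is the composite of the analytic functors of `A` and `B`. -/
theorem stmt12 (A B : Species.{u})
    (hB : IsEmpty (B.obj ⟨FintypeCat.of PEmpty.{u + 1}⟩)) (X : Type u) :
    Nonempty (FanalyticComp A B X ≃ Fanalytic A (Fanalytic B X)) :=
  ⟨Equiv.ofBijective (FanalyticComp.toComp A B)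
    ⟨FanalyticComp.toComp_injective A B, FanalyticComp.toComp_surjective A B hB⟩⟩
end

section
/- Let C be a category with finite coproducts and let Sym^×(C) denote the free symmetric (strict up to coherence) monoidal category on C, whose objects are finite sequences of objects of C. Let p : Sym^×(C) → C be the functor sending a sequence (x_1, ..., x_n) to the coproduct x_1 ⊔ ... ⊔ x_n. Then for every object x of C, the functor from the groupoid of finite sets and bijections Fin^≅ to the comma category Sym^×(C)_{/x}, sending a finite set I to the pair consisting of the constant sequence (x)_{i∈I} together with the fold map ⊔_{i∈I} x → x, is a final functor. -/
universe v u

open CategoryTheory Limits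

/-- The free symmetric monoidal category on a category `C`: objects are finite sequences
of objects of `C`, and morphisms are a bijection of the index sets together with morphisms
between corresponding components. -/
def SymCat (C : Type u) [Category.{v} C] : Type u := Σ n : ℕ, Fin n → C

instance SymCat.category (C : Type u) [Category.{v} C] : Category.{max v u} (SymCat C) where
  Hom x y := Σ σ : Fin x.1 ≃ Fin y.1, ∀ i, ULift.{u} (x.2 i ⟶ y.2 (σ i))
  id x := ⟨Equiv.refl _, fun i => ⟨𝟙 (x.2 i)⟩⟩
  comp {x y z} f g := ⟨f.1.trans g.1, fun i => ⟨(f.2 i).down ≫ (g.2 (f.1 i)).down⟩⟩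
  id_comp := by
    rintro ⟨n, x⟩ ⟨m, y⟩ ⟨σ, f⟩
    exact Sigma.ext rfl (heq_of_eq (funext fun i => congrArg ULift.up
      (Category.id_comp (f i).down)))
  comp_id := by
    rintro ⟨n, x⟩ ⟨m, y⟩ ⟨σ, f⟩
    exact Sigma.ext rfl (heq_of_eq (funext fun i => congrArg ULift.up
      (Category.comp_id (f i).down)))
  assoc := by
    rintro w x y z ⟨σ, f⟩ ⟨τ, g⟩ ⟨ρ, h⟩
    exact Sigma.ext rfl (heq_of_eq (funext fun i => congrArg ULift.up
      (Category.assoc (f i).down (g (σ i)).down (h (τ (σ i))).down)))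

variable {C : Type u} [Category.{v} C] [HasFiniteCoproducts C]

/-- The canonical functor `p : Sym^×(C) ⥤ C` taking a finite sequence of objects to its
coproduct. -/
noncomputable def symFold : SymCat C ⥤ C where
  obj x := ∐ x.2
  map {x y} f := Sigma.desc fun i => (f.2 i).down ≫ Sigma.ι y.2 (f.1 i)
  map_id := by
    rintro ⟨n, x⟩
    ext i
    simp [SymCat.category]
    exact Category.id_comp _
  map_comp := by
    rintro x y z f g
    ext i
    simp [SymCat.category]
    exact Category.assoc _ _ _

attribute [local instance] FintypeCat.fintype

/-- The underlying finite type of an object of the groupoid of finite sets. -/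
abbrev coreTy (I : Core FintypeCat.{u}) : Type u := ((Core.inclusion FintypeCat).obj I : Type u)

/-- The equivalence of underlying types induced by a bijection in the groupoid of
finite sets. -/
def coreEquiv {I J : Core FintypeCat.{u}} (e : I ⟶ J) : coreTy I ≃ coreTy J :=
  FintypeCat.equivEquivIso.symm
    (show (Core.inclusion FintypeCat).obj I ≅ (Core.inclusion FintypeCat).obj J from e.iso)

/-- The constant sequence `(x)_{i ∈ I}` equipped with the fold map, as an object of the
comma category `Sym^×(C)_{/x}`. -/
noncomputable def foldObj (x : C) (I : Core FintypeCat.{u}) :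
    CostructuredArrow (symFold (C := C)) x :=
  { left := (⟨Fintype.card (coreTy I), fun _ => x⟩ : SymCat C)
    right := ⟨⟨⟩⟩
    hom := Limits.Sigma.desc fun _ => 𝟙 x }

/-- The morphism of comma objects induced by a bijection of finite sets. -/
noncomputable def foldMap (x : C) {I J : Core FintypeCat.{u}} (e : I ⟶ J) :
    foldObj (C := C) x I ⟶ foldObj (C := C) x J :=
  CostructuredArrow.homMk
    (⟨(Fintype.equivFin (coreTy I)).symm.trans ((coreEquiv e).trans
        (Fintype.equivFin (coreTy J))), fun _ => ⟨𝟙 x⟩⟩)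
    (by
      dsimp only [foldObj, symFold]
      ext i
      simp
      exact (Sigma.ι_desc _ _).trans (Sigma.ι_desc (fun _ => 𝟙 x) i).symm)

/-- The functor from the groupoid of finite sets and bijections to `Sym^×(C)_{/x}`,
sending a finite set `I` to the constant sequence `(x)_{i ∈ I}` equipped with the fold map
`⊔_{i ∈ I} x ⟶ x`. -/
noncomputable def foldDiagram (x : C) :
    Core FintypeCat.{u} ⥤ CostructuredArrow (symFold (C := C)) x where
  obj I := foldObj x I
  map {I J} e := foldMap x e
  map_id := by
    intro I
    apply CostructuredArrow.hom_ext
    refine Sigma.ext ?_ HEq.rfl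
    show Equiv.trans _ _ = Equiv.refl _
    have h : coreEquiv (𝟙 I) = Equiv.refl (coreTy I) := by
      ext a
      rfl
    rw [h]
    ext a
    simp
    exact congrArg Fin.val ((Fintype.equivFin _).apply_symm_apply a)
  map_comp := by
    intro I J K e e'
    apply CostructuredArrow.hom_ext
    refine Sigma.ext ?_ (heq_of_eq (funext fun i => congrArg ULift.up
      (Category.id_comp (𝟙 x)).symm))
    show Equiv.trans _ _ = Equiv.trans _ _
    have h : coreEquiv (e ≫ e') = (coreEquiv e).trans (coreEquiv e') := by
      ext a
      rfl
    rw [h]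
    ext a
    simp [foldMap]
    exact congrArg (fun y => ((Fintype.equivFin _) (coreEquiv e' y) : ℕ))
      ((Fintype.equivFin _).symm_apply_apply _).symm

/-!
A morphism from `d = ((y_i)_{i < n}, f)` to `((x)_{i ∈ I}, fold)` in `Sym^×(C)_{/x}` is a bijection
`Fin n ≃ I` together with maps `y_i ⟶ x`, and commutativity over `x` forces these maps to be the
components of `f`. So such morphisms are just bijections `Fin n ≃ I`: there is one (take
`I = Fin n`), and any two, into `I` and into `J`, are related by the bijection `I ≃ J` through
`Fin n`. Hence the comma category `d / foldDiagram x` is nonempty with a morphism between any two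
objects, in particular connected.
-/

lemma ι_symFold_map {a b : SymCat C} (f : a ⟶ b) (i : Fin a.1) :
    Sigma.ι a.2 i ≫ symFold.map f = (f.2 i).down ≫ Sigma.ι b.2 (f.1 i) :=
  Sigma.ι_desc _ i

section

variable {x : C}

-- `SymCat C` is not reducibly a sigma type, so `rw` and `simp` fail to abstract terms such as
-- `d.left.2`; the proofs below are therefore written as terms.
lemma ι_symFold_map_foldDiagram_obj_hom {a : SymCat C} {I : Core FintypeCat.{u}}
    (g : a ⟶ ((foldDiagram x).obj I).left) (i : Fin a.1) :
    Sigma.ι a.2 i ≫ symFold.map g ≫ ((foldDiagram x).obj I).hom = (g.2 i).down :=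
  (Category.assoc _ _ _).symm.trans <| (ι_symFold_map g i =≫ _).trans <|
    (Category.assoc _ _ _).trans <| ((g.2 i).down ≫= Sigma.ι_desc _ _).trans (Category.comp_id _)

noncomputable def homToFoldDiagramObj (d : CostructuredArrow (symFold (C := C)) x)
    {I : Core FintypeCat.{u}} (σ : Fin d.left.1 ≃ coreTy I) : d ⟶ (foldDiagram x).obj I :=
  CostructuredArrow.homMk ⟨σ.trans (Fintype.equivFin _), fun i => ⟨Sigma.ι d.left.2 i ≫ d.hom⟩⟩
    (Sigma.hom_ext _ _ fun i => ι_symFold_map_foldDiagram_obj_hom _ i)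

lemma left_snd_down_of_hom_foldDiagram_obj {d : CostructuredArrow (symFold (C := C)) x}
    {I : Core FintypeCat.{u}} (f : d ⟶ (foldDiagram x).obj I) (i : Fin d.left.1) :
    (f.left.2 i).down = Sigma.ι d.left.2 i ≫ d.hom :=
  (ι_symFold_map_foldDiagram_obj_hom f.left i).symm.trans
    (Sigma.ι d.left.2 i ≫= CostructuredArrow.w f)

lemma hom_foldDiagram_obj_ext {d : CostructuredArrow (symFold (C := C)) x}
    {I : Core FintypeCat.{u}} (f g : d ⟶ (foldDiagram x).obj I) (h : f.left.1 = g.left.1) :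
    f = g :=
  CostructuredArrow.hom_ext _ _ <| Sigma.ext h <| heq_of_eq <| funext fun i =>
    congrArg ULift.up <| (left_snd_down_of_hom_foldDiagram_obj f i).trans
      (left_snd_down_of_hom_foldDiagram_obj g i).symm

lemma exists_comp_foldDiagram_map_eq {d : CostructuredArrow (symFold (C := C)) x}
    {I J : Core FintypeCat.{u}} (f : d ⟶ (foldDiagram x).obj I) (g : d ⟶ (foldDiagram x).obj J) :
    ∃ e : I ⟶ J, f ≫ (foldDiagram x).map e = g := by
  let τ : coreTy I ≃ coreTy J := (Fintype.equivFin _).trans <|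
    f.left.1.symm.trans <| g.left.1.trans (Fintype.equivFin _).symm
  refine ⟨⟨FintypeCat.equivEquivIso τ⟩, hom_foldDiagram_obj_ext _ _ (Equiv.ext fun i => ?_)⟩
  show Fintype.equivFin _ ((Fintype.equivFin _).symm (g.left.1 (f.left.1.symm
    (Fintype.equivFin _ ((Fintype.equivFin _).symm (f.left.1 i)))))) = g.left.1 i
  exact (Equiv.apply_symm_apply _ _).trans <| congrArg g.left.1 <|
    (congrArg f.left.1.symm (Equiv.apply_symm_apply _ _)).trans (f.left.1.symm_apply_apply i)

end

/-- The functor `Fin^≅ ⥤ Sym^×(C)_{/x}`, `I ↦ ((x)_{i ∈ I}, fold)`, is final. -/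
theorem stmt13 (x : C) : (foldDiagram (C := C) x).Final := by
  refine ⟨fun d => ?_⟩
  have : Nonempty (StructuredArrow d (foldDiagram x)) :=
    ⟨.mk (homToFoldDiagramObj d (I := ⟨FintypeCat.of (ULift (Fin d.left.1))⟩) Equiv.ulift.symm)⟩
  refine zigzag_isConnected fun j₁ j₂ => ?_
  obtain ⟨e, he⟩ := exists_comp_foldDiagram_map_eq j₁.hom j₂.hom
  exact Zigzag.of_hom (StructuredArrow.homMk e he)
end

section
/- Let C be a category admitting pushouts and a terminal object, D a category admitting pullbacks, and n ≥ 0. If a functor F : C → D sends every strongly cocartesian (n+1)-cube in C to a cartesian (n+1)-cube in D, then F sends every strongly cocartesian (n+2)-cube in C to a cartesian (n+2)-cube in D. That is, every n-excisive functor is (n+1)-excisive. -/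
open CategoryTheory Limits

/-- A cube `X : P(S) ⥤ C` is strongly cocartesian if it is left Kan extended from the
subposet of subsets of cardinality at most 1. -/
def IsStronglyCocartesianCube {S : Type} [Fintype S] [DecidableEq S]
    {C : Type*} [Category C] (X : Finset S ⥤ C) : Prop :=
  X.IsLeftKanExtension
    (𝟙 (ObjectProperty.ι (fun T : Finset S => T.card ≤ 1) ⋙ X))

/-- A cube `X : P(S) ⥤ D` is cartesian if it exhibits `X(∅)` as the limit of its
restriction to the nonempty subsets of `S`. -/
def IsCartesianCube {S : Type} [Fintype S] [DecidableEq S]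
    {D : Type*} [Category D] (X : Finset S ⥤ D) : Prop :=
  Nonempty (IsLimit (Cone.mk (X.obj ∅)
    { app := fun T => X.map (homOfLE (Finset.empty_subset T.obj))
      naturality := by
        intro T T' f
        dsimp
        rw [Category.id_comp, ← X.map_comp]
        rfl } :
    Cone (ObjectProperty.ι (fun T : Finset S => T.Nonempty) ⋙ X)))

/-!
With pushouts available, a cube `X` is strongly cocartesian iff each `X T` is the wide pushout
of the maps `X ∅ ⟶ X {u}`, `u ∈ T`: these wide pushouts exist by induction on `T` (adjoin one
pushout at a time), so the left Kan extension from subsets of cardinality `≤ 1` is pointwise and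
its colimit cocones are exactly wide pushout cocones. The wide pushout property is inherited by
every face `T ↦ A ∪ e '' T`, so for `s ∈ S` the two opposite faces `T ↦ T` and `T ↦ T ∪ {s}`
indexed by `S ∖ {s}` are strongly cocartesian `(n+1)`-cubes and become cartesian after `F`.
A cube whose two opposite faces are cartesian is cartesian: a cone over the punctured cube
restricts to the face avoiding `s`, which gives the map to `F (X ∅)`; compatibility at `{s}` is
checked against the limit exhibiting `F (X {s})` through the face containing `s`.
-/

open Functor

namespace FinsetCube

section Preorder

variable {P : Type*} [Preorder P] {C : Type*} [Category C] (X : P ⥤ C)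

lemma map_homOfLE_comp {a b c : P} (h₁ : a ≤ b) (h₂ : b ≤ c) :
    X.map (homOfLE h₁) ≫ X.map (homOfLE h₂) = X.map (homOfLE (h₁.trans h₂)) := by
  rw [← X.map_comp, homOfLE_comp]

lemma map_homOfLE_comp_assoc {a b c : P} (h₁ : a ≤ b) (h₂ : b ≤ c) {W : C} (k : X.obj c ⟶ W) :
    X.map (homOfLE h₁) ≫ X.map (homOfLE h₂) ≫ k = X.map (homOfLE (h₁.trans h₂)) ≫ k := by
  rw [← Category.assoc, map_homOfLE_comp]

lemma map_homOfLE_self {a : P} (h : a ≤ a) : X.map (homOfLE h) = 𝟙 (X.obj a) :=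
  X.map_id a

end Preorder

variable {σ τ : Type*} {C : Type*} [Category C]

def IsWidePushout (X : Finset σ ⥤ C) (T : Finset σ) {P : C} (ι₀ : X.obj ∅ ⟶ P)
    (ι : ∀ u ∈ T, X.obj {u} ⟶ P) : Prop :=
  ∀ ⦃W : C⦄ (g₀ : X.obj ∅ ⟶ W) (g : ∀ u ∈ T, X.obj {u} ⟶ W),
    (∀ u hu, X.map (homOfLE (Finset.empty_subset {u})) ≫ g u hu = g₀) →
    ∃! m : P ⟶ W, ι₀ ≫ m = g₀ ∧ ∀ u hu, ι u hu ≫ m = g u hu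

def IsWidePushoutCube (X : Finset σ ⥤ C) : Prop :=
  ∀ T : Finset σ, IsWidePushout X T (X.map (homOfLE T.empty_subset))
    fun _ hu => X.map (homOfLE (Finset.singleton_subset_iff.2 hu))

lemma IsWidePushoutCube.hom_ext {X : Finset σ ⥤ C} (hX : IsWidePushoutCube X) {T : Finset σ}
    {W : C} {m m' : X.obj T ⟶ W}
    (h₀ : X.map (homOfLE T.empty_subset) ≫ m = X.map (homOfLE T.empty_subset) ≫ m')
    (h : ∀ u (hu : u ∈ T), X.map (homOfLE (Finset.singleton_subset_iff.2 hu)) ≫ m =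
      X.map (homOfLE (Finset.singleton_subset_iff.2 hu)) ≫ m') :
    m = m' :=
  (hX T _ _ fun _ _ => map_homOfLE_comp_assoc X _ _ m).unique ⟨rfl, fun _ _ => rfl⟩
    ⟨h₀.symm, fun u hu => (h u hu).symm⟩

abbrev cardLEOne (σ : Type*) : ObjectProperty (Finset σ) := fun T => T.card ≤ 1

abbrev kanDiagram (X : Finset σ ⥤ C) (T : Finset σ) :
    CostructuredArrow (cardLEOne σ).ι T ⥤ C :=
  CostructuredArrow.proj (cardLEOne σ).ι T ⋙ (cardLEOne σ).ι ⋙ X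

def emptyArrow (T : Finset σ) : CostructuredArrow (cardLEOne σ).ι T :=
  CostructuredArrow.mk (Y := (⟨∅, by simp⟩ : (cardLEOne σ).FullSubcategory))
    (homOfLE T.empty_subset)

def singletonArrow {T : Finset σ} {u : σ} (hu : u ∈ T) : CostructuredArrow (cardLEOne σ).ι T :=
  CostructuredArrow.mk (Y := (⟨{u}, by simp⟩ : (cardLEOne σ).FullSubcategory))
    (homOfLE (Finset.singleton_subset_iff.2 hu))

lemma eq_emptyArrow_or_singletonArrow {T : Finset σ} (j : CostructuredArrow (cardLEOne σ).ι T) :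
    j = emptyArrow T ∨ ∃ u, ∃ hu : u ∈ T, j = singletonArrow hu := by
  obtain ⟨⟨U, hU⟩, ⟨⟨⟩⟩, ⟨⟨hUT⟩⟩⟩ := j
  obtain hU | hU : U.card = 0 ∨ U.card = 1 := by omega
  · obtain rfl := Finset.card_eq_zero.1 hU
    exact .inl rfl
  · obtain ⟨u, rfl⟩ := Finset.card_eq_one.1 hU
    exact .inr ⟨u, Finset.singleton_subset_iff.1 hUT, rfl⟩

variable {X : Finset σ ⥤ C} {T : Finset σ}

lemma ι_app_emptyArrow_comp (c : Cocone (kanDiagram X T)) {u : σ} (hu : u ∈ T) :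
    X.map (homOfLE (Finset.empty_subset {u})) ≫ c.ι.app (singletonArrow hu) =
      c.ι.app (emptyArrow T) :=
  c.w (CostructuredArrow.homMk (ObjectProperty.homMk (homOfLE
    (Finset.empty_subset {u}))) : emptyArrow T ⟶ singletonArrow hu)

lemma ι_app_comp_eq_iff {c d : Cocone (kanDiagram X T)} (m : c.pt ⟶ d.pt) :
    (∀ j, c.ι.app j ≫ m = d.ι.app j) ↔
      c.ι.app (emptyArrow T) ≫ m = d.ι.app (emptyArrow T) ∧
        ∀ u (hu : u ∈ T), c.ι.app (singletonArrow hu) ≫ m = d.ι.app (singletonArrow hu) := by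
  refine ⟨fun h => ⟨h _, fun _ _ => h _⟩, fun ⟨h₀, h⟩ j => ?_⟩
  obtain rfl | ⟨u, hu, rfl⟩ := eq_emptyArrow_or_singletonArrow j
  exacts [h₀, h u hu]

lemma subset_singleton_of_card_le_one {U : Finset σ} (hU : U.card ≤ 1) {u : σ} (hu : u ∈ U) :
    U ⊆ {u} :=
  fun x hx => Finset.mem_singleton.2 (Finset.card_le_one.1 hU x hx u hu)

section Legs

variable {P : C} (ι₀ : X.obj ∅ ⟶ P) (ι : ∀ u ∈ T, X.obj {u} ⟶ P)

noncomputable def extendLegs (j : CostructuredArrow (cardLEOne σ).ι T) : X.obj j.left.obj ⟶ P :=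
  if h : j.left.obj.Nonempty then
    X.map (homOfLE (subset_singleton_of_card_le_one j.left.property h.choose_spec)) ≫
      ι _ (leOfHom j.hom h.choose_spec)
  else X.map (homOfLE (Finset.not_nonempty_iff_eq_empty.1 h).le) ≫ ι₀

lemma extendLegs_of_mem {j : CostructuredArrow (cardLEOne σ).ι T} {u : σ} (hu : u ∈ j.left.obj) :
    extendLegs ι₀ ι j = X.map (homOfLE (subset_singleton_of_card_le_one j.left.property hu)) ≫
      ι u (leOfHom j.hom hu) := by
  have congr_leg : ∀ v (hv : v = u) (h₁ : j.left.obj ⊆ {v}) (h₂ : v ∈ T),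
      X.map (homOfLE h₁) ≫ ι v h₂ = X.map (homOfLE (subset_singleton_of_card_le_one
        j.left.property hu)) ≫ ι u (leOfHom j.hom hu) := by
    rintro v rfl _ _
    rfl
  rw [extendLegs, dif_pos ⟨u, hu⟩]
  exact congr_leg _ (Finset.card_le_one.1 j.left.property _
    (Exists.choose_spec (⟨u, hu⟩ : j.left.obj.Nonempty)) u hu) _ _

lemma extendLegs_of_eq_empty {j : CostructuredArrow (cardLEOne σ).ι T} (hj : j.left.obj = ∅) :
    extendLegs ι₀ ι j = X.map (homOfLE hj.le) ≫ ι₀ := by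
  rw [extendLegs, dif_neg (Finset.not_nonempty_iff_eq_empty.2 hj)]

variable {ι₀ ι}

noncomputable def coconeOfLegs
    (hι : ∀ u hu, X.map (homOfLE (Finset.empty_subset {u})) ≫ ι u hu = ι₀) :
    Cocone (kanDiagram X T) where
  pt := P
  ι.app := extendLegs ι₀ ι
  ι.naturality j j' f := by
    change X.map (homOfLE (leOfHom f.left.hom)) ≫ extendLegs ι₀ ι j' = extendLegs ι₀ ι j ≫ 𝟙 P
    rw [Category.comp_id]
    obtain hj | ⟨u, hu⟩ := j.left.obj.eq_empty_or_nonempty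
    · rw [extendLegs_of_eq_empty ι₀ ι hj]
      obtain hj' | ⟨u', hu'⟩ := j'.left.obj.eq_empty_or_nonempty
      · rw [extendLegs_of_eq_empty ι₀ ι hj', map_homOfLE_comp_assoc]
      · rw [extendLegs_of_mem ι₀ ι hu', map_homOfLE_comp_assoc, ← hι u', map_homOfLE_comp_assoc]
    · rw [extendLegs_of_mem ι₀ ι hu, extendLegs_of_mem ι₀ ι (leOfHom f.left.hom hu),
        map_homOfLE_comp_assoc]

variable (hι : ∀ u hu, X.map (homOfLE (Finset.empty_subset {u})) ≫ ι u hu = ι₀)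

lemma coconeOfLegs_ι_app_emptyArrow : (coconeOfLegs hι).ι.app (emptyArrow T) = ι₀ := by
  change extendLegs ι₀ ι (emptyArrow T) = ι₀
  rw [extendLegs_of_eq_empty ι₀ ι (j := emptyArrow T) rfl]
  show X.map (homOfLE (le_refl ∅)) ≫ ι₀ = ι₀
  rw [map_homOfLE_self, Category.id_comp]

lemma coconeOfLegs_ι_app_singletonArrow {u : σ} (hu : u ∈ T) :
    (coconeOfLegs hι).ι.app (singletonArrow hu) = ι u hu := by
  change extendLegs ι₀ ι (singletonArrow hu) = ι u hu
  rw [extendLegs_of_mem ι₀ ι (j := singletonArrow hu) (Finset.mem_singleton_self u)]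
  show X.map (homOfLE (le_refl {u})) ≫ ι u hu = ι u hu
  rw [map_homOfLE_self, Category.id_comp]

end Legs

lemma isWidePushout_of_isColimit {c : Cocone (kanDiagram X T)} (hc : IsColimit c) :
    IsWidePushout (P := c.pt) X T (c.ι.app (emptyArrow T)) fun _ hu =>
      c.ι.app (singletonArrow hu) := by
  intro W g₀ g hg
  refine (existsUnique_congr fun m => ?_).1
    ⟨hc.desc (coconeOfLegs hg), hc.fac _, fun m hm => hc.uniq (coconeOfLegs hg) m hm⟩
  rw [ι_app_comp_eq_iff (d := coconeOfLegs hg) m, coconeOfLegs_ι_app_emptyArrow]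
  simp only [coconeOfLegs_ι_app_singletonArrow]
  exact Iff.rfl

noncomputable def isColimitOfIsWidePushout {c : Cocone (kanDiagram X T)}
    (h : IsWidePushout (P := c.pt) X T (c.ι.app (emptyArrow T)) fun _ hu =>
      c.ι.app (singletonArrow hu)) :
    IsColimit c :=
  IsColimit.ofExistsUnique fun d => (existsUnique_congr ι_app_comp_eq_iff).2 <|
    h _ (fun _ hu => d.ι.app (singletonArrow hu)) fun _ hu => ι_app_emptyArrow_comp d hu

lemma isWidePushout_empty (X : Finset σ ⥤ C) :
    IsWidePushout X ∅ (𝟙 (X.obj ∅)) fun u hu => (Finset.notMem_empty u hu).elim :=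
  fun _ g₀ _ _ => ⟨g₀, ⟨Category.id_comp g₀, fun u hu => (Finset.notMem_empty u hu).elim⟩,
    fun _ h => (Category.id_comp _).symm.trans h.1⟩

section Insert

variable [DecidableEq σ] [HasPushouts C] {a : σ} {P : C}

noncomputable def insertLeg (ι₀ : X.obj ∅ ⟶ P) (ι : ∀ u ∈ T, X.obj {u} ⟶ P) (u : σ)
    (hu : u ∈ insert a T) : X.obj {u} ⟶ pushout (X.map (homOfLE (Finset.empty_subset {a}))) ι₀ :=
  if h : u ∈ T then ι u h ≫ pushout.inr _ _
  else X.map (homOfLE (Finset.singleton_subset_singleton.2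
    ((Finset.mem_insert.1 hu).resolve_right h))) ≫ pushout.inl _ _

variable {ι₀ : X.obj ∅ ⟶ P} {ι : ∀ u ∈ T, X.obj {u} ⟶ P}

lemma insertLeg_of_mem {u : σ} (hu : u ∈ T) :
    insertLeg (a := a) ι₀ ι u (Finset.mem_insert_of_mem hu) = ι u hu ≫ pushout.inr _ _ :=
  dif_pos hu

lemma insertLeg_self (ha : a ∉ T) :
    insertLeg ι₀ ι a (Finset.mem_insert_self a T) = pushout.inl _ _ := by
  rw [insertLeg, dif_neg ha, map_homOfLE_self, Category.id_comp]

lemma insertLeg_compat (hι : ∀ u hu, X.map (homOfLE (Finset.empty_subset {u})) ≫ ι u hu = ι₀)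
    (u : σ) (hu : u ∈ insert a T) :
    X.map (homOfLE (Finset.empty_subset {u})) ≫ insertLeg ι₀ ι u hu = ι₀ ≫ pushout.inr _ _ := by
  by_cases h : u ∈ T
  · rw [insertLeg_of_mem h, ← Category.assoc, hι]
  · rw [insertLeg, dif_neg h, map_homOfLE_comp_assoc]
    exact pushout.condition

lemma IsWidePushout.insert (hP : IsWidePushout X T ι₀ ι) (ha : a ∉ T) :
    IsWidePushout X (insert a T) (ι₀ ≫ pushout.inr _ _) (insertLeg ι₀ ι) := by
  intro W g₀ g hg
  obtain ⟨m, ⟨hm₀, hm⟩, hm_uniq⟩ :=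
    hP g₀ (fun u hu => g u (Finset.mem_insert_of_mem hu)) fun u _ => hg u _
  have hcond : X.map (homOfLE (Finset.empty_subset {a})) ≫ g a (Finset.mem_insert_self a T) =
      ι₀ ≫ m := (hg a _).trans hm₀.symm
  refine ⟨pushout.desc _ m hcond, ⟨by rw [Category.assoc, pushout.inr_desc, hm₀], fun u hu => ?_⟩,
    fun m' ⟨hm'₀, hm'⟩ => pushout.hom_ext ?_ ?_⟩
  · by_cases h : u ∈ T
    · rw [insertLeg_of_mem h, Category.assoc, pushout.inr_desc, hm]
    · obtain rfl := (Finset.mem_insert.1 hu).resolve_right h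
      rw [insertLeg_self ha, pushout.inl_desc]
  · rw [pushout.inl_desc, ← insertLeg_self ha]
    exact hm' a _
  · rw [pushout.inr_desc]
    refine hm_uniq _ ⟨by rw [← Category.assoc, hm'₀], fun u hu => ?_⟩
    rw [← Category.assoc, ← insertLeg_of_mem hu]
    exact hm' u _

end Insert

lemma exists_isWidePushout [DecidableEq σ] [HasPushouts C] (X : Finset σ ⥤ C) (T : Finset σ) :
    ∃ (P : C) (ι₀ : X.obj ∅ ⟶ P) (ι : ∀ u ∈ T, X.obj {u} ⟶ P),
      (∀ u hu, X.map (homOfLE (Finset.empty_subset {u})) ≫ ι u hu = ι₀) ∧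
        IsWidePushout X T ι₀ ι := by
  induction T using Finset.induction_on with
  | empty => exact ⟨_, _, _, fun u hu => (Finset.notMem_empty u hu).elim, isWidePushout_empty X⟩
  | insert a T ha ih =>
    obtain ⟨P, ι₀, ι, hι, hP⟩ := ih
    exact ⟨_, _, _, insertLeg_compat hι, hP.insert ha⟩

lemma hasPointwiseLeftKanExtension [DecidableEq σ] [HasPushouts C] (X : Finset σ ⥤ C) :
    HasPointwiseLeftKanExtension (cardLEOne σ).ι ((cardLEOne σ).ι ⋙ X) := fun T => by
  obtain ⟨P, ι₀, ι, hι, hP⟩ := exists_isWidePushout X T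
  refine ⟨⟨⟨coconeOfLegs hι, isColimitOfIsWidePushout ?_⟩⟩⟩
  simp only [coconeOfLegs_ι_app_emptyArrow, coconeOfLegs_ι_app_singletonArrow]
  exact hP

lemma coconeAt_ι_app_emptyArrow (X : Finset σ ⥤ C) (T : Finset σ) :
    ((LeftExtension.mk X (𝟙 ((cardLEOne σ).ι ⋙ X))).coconeAt T).ι.app (emptyArrow T) =
      X.map (homOfLE T.empty_subset) :=
  Category.id_comp _

lemma coconeAt_ι_app_singletonArrow (X : Finset σ ⥤ C) {u : σ} (hu : u ∈ T) :
    ((LeftExtension.mk X (𝟙 ((cardLEOne σ).ι ⋙ X))).coconeAt T).ι.app (singletonArrow hu) =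
      X.map (homOfLE (Finset.singleton_subset_iff.2 hu)) :=
  Category.id_comp _

theorem IsStronglyCocartesianCube.isWidePushoutCube {S : Type} [Fintype S] [DecidableEq S]
    [HasPushouts C] {X : Finset S ⥤ C} (hX : IsStronglyCocartesianCube X) :
    IsWidePushoutCube X := fun T => by
  have : X.IsLeftKanExtension (𝟙 ((cardLEOne S).ι ⋙ X)) := hX
  have := hasPointwiseLeftKanExtension X
  have h := isWidePushout_of_isColimit
    (isPointwiseLeftKanExtensionOfIsLeftKanExtension X (𝟙 ((cardLEOne S).ι ⋙ X)) T)
  simp only [coconeAt_ι_app_emptyArrow, coconeAt_ι_app_singletonArrow] at h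
  exact h

theorem IsWidePushoutCube.isStronglyCocartesianCube {S : Type} [Fintype S] [DecidableEq S]
    {X : Finset S ⥤ C} (hX : IsWidePushoutCube X) : IsStronglyCocartesianCube X :=
  LeftExtension.IsPointwiseLeftKanExtension.isLeftKanExtension (E := LeftExtension.mk X (𝟙 _))
    fun T => isColimitOfIsWidePushout <| by
      simp only [coconeAt_ι_app_emptyArrow, coconeAt_ι_app_singletonArrow]
      exact hX T

section Face

variable [DecidableEq σ]

lemma union_map_mono (A : Finset σ) (e : τ ↪ σ) {T T' : Finset τ} (h : T ⊆ T') :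
    A ∪ T.map e ⊆ A ∪ T'.map e :=
  Finset.union_subset_union subset_rfl (Finset.map_subset_map.2 h)

def face (A : Finset σ) (e : τ ↪ σ) : Finset τ ⥤ Finset σ :=
  Monotone.functor (f := fun T => A ∪ T.map e) fun _ _ => union_map_mono A e

variable {X : Finset σ ⥤ C} {A : Finset σ} {e : τ ↪ σ} {T : Finset τ} {W : C} {u : σ}

lemma exists_mem_union_map_singleton (hu : u ∈ A ∪ T.map e)
    (hA : u ∉ A ∪ (∅ : Finset τ).map e) : ∃ v ∈ T, u ∈ A ∪ ({v} : Finset τ).map e := by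
  simp only [Finset.mem_union, Finset.mem_map, Finset.map_empty, Finset.notMem_empty, or_false,
    Finset.mem_singleton, exists_eq_left] at hu hA ⊢
  obtain ⟨v, hv, rfl⟩ := hu.resolve_left hA
  exact ⟨v, hv, .inr rfl⟩

lemma eq_of_mem_union_map_singleton {v : τ} (huv : u ∈ A ∪ ({v} : Finset τ).map e)
    (hA : u ∉ A ∪ (∅ : Finset τ).map e) : e v = u := by
  simp_all

section FaceLeg

variable (g₀ : X.obj (A ∪ (∅ : Finset τ).map e) ⟶ W)
  (g : ∀ v ∈ T, X.obj (A ∪ ({v} : Finset τ).map e) ⟶ W)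

noncomputable def faceLeg (u : σ) (hu : u ∈ A ∪ T.map e) : X.obj {u} ⟶ W :=
  if hA : u ∈ A ∪ (∅ : Finset τ).map e then
    X.map (homOfLE (Finset.singleton_subset_iff.2 hA)) ≫ g₀
  else
    have hv := (exists_mem_union_map_singleton hu hA).choose_spec
    X.map (homOfLE (Finset.singleton_subset_iff.2 hv.2)) ≫ g _ hv.1

lemma faceLeg_of_mem (hu : u ∈ A ∪ T.map e) (hA : u ∈ A ∪ (∅ : Finset τ).map e) :
    faceLeg g₀ g u hu = X.map (homOfLE (Finset.singleton_subset_iff.2 hA)) ≫ g₀ :=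
  dif_pos hA

variable {g₀ g}
  (hg : ∀ v hv, X.map (homOfLE (union_map_mono A e (Finset.empty_subset {v}))) ≫ g v hv = g₀)
include hg

lemma faceLeg_eq (hu : u ∈ A ∪ T.map e) {v : τ} (hv : v ∈ T)
    (huv : u ∈ A ∪ ({v} : Finset τ).map e) :
    faceLeg g₀ g u hu = X.map (homOfLE (Finset.singleton_subset_iff.2 huv)) ≫ g v hv := by
  by_cases hA : u ∈ A ∪ (∅ : Finset τ).map e
  · rw [faceLeg_of_mem g₀ g hu hA, ← hg v hv, map_homOfLE_comp_assoc]
  · have congr_leg : ∀ v' (hv' : v' = v) h₁ h₂, X.map (homOfLE h₁) ≫ g v' h₂ =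
        X.map (homOfLE (Finset.singleton_subset_iff.2 huv)) ≫ g v hv := by
      rintro _ rfl _ _
      rfl
    have hchoose := (exists_mem_union_map_singleton hu hA).choose_spec.2
    exact (dif_neg hA).trans (congr_leg _ (e.injective ((eq_of_mem_union_map_singleton
      hchoose hA).trans (eq_of_mem_union_map_singleton huv hA).symm)) _ _)

lemma faceLeg_compat (hu : u ∈ A ∪ T.map e) :
    X.map (homOfLE (Finset.empty_subset {u})) ≫ faceLeg g₀ g u hu =
      X.map (homOfLE (Finset.empty_subset _)) ≫ g₀ := by
  by_cases hA : u ∈ A ∪ (∅ : Finset τ).map e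
  · rw [faceLeg_of_mem g₀ g hu hA, map_homOfLE_comp_assoc]
  · obtain ⟨v, hv, huv⟩ := exists_mem_union_map_singleton hu hA
    rw [faceLeg_eq hg hu hv huv, map_homOfLE_comp_assoc, ← hg v hv, map_homOfLE_comp_assoc]

lemma map_comp_eq_faceLeg {m : X.obj (A ∪ T.map e) ⟶ W}
    (h₀ : X.map (homOfLE (union_map_mono A e T.empty_subset)) ≫ m = g₀)
    (h : ∀ v hv, X.map (homOfLE (union_map_mono A e (Finset.singleton_subset_iff.2 hv))) ≫ m =
      g v hv) (hu : u ∈ A ∪ T.map e) :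
    X.map (homOfLE (Finset.singleton_subset_iff.2 hu)) ≫ m = faceLeg g₀ g u hu := by
  by_cases hA : u ∈ A ∪ (∅ : Finset τ).map e
  · rw [faceLeg_of_mem g₀ g hu hA, ← h₀, map_homOfLE_comp_assoc]
  · obtain ⟨v, hv, huv⟩ := exists_mem_union_map_singleton hu hA
    rw [faceLeg_eq hg hu hv huv, ← h v hv, map_homOfLE_comp_assoc]

end FaceLeg

theorem IsWidePushoutCube.comp_face (hX : IsWidePushoutCube X) (A : Finset σ) (e : τ ↪ σ) :
    IsWidePushoutCube (face A e ⋙ X) := by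
  intro T
  show ∀ ⦃W : C⦄ (g₀ : X.obj (A ∪ (∅ : Finset τ).map e) ⟶ W)
    (g : ∀ v ∈ T, X.obj (A ∪ ({v} : Finset τ).map e) ⟶ W),
    (∀ v hv, X.map (homOfLE (union_map_mono A e (Finset.empty_subset {v}))) ≫ g v hv = g₀) →
    ∃! m : X.obj (A ∪ T.map e) ⟶ W, X.map (homOfLE (union_map_mono A e T.empty_subset)) ≫ m = g₀ ∧
      ∀ v hv, X.map (homOfLE (union_map_mono A e (Finset.singleton_subset_iff.2 hv))) ≫ m = g v hv
  intro W g₀ g hg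
  obtain ⟨m, ⟨hm₀, hm⟩, hm_uniq⟩ :=
    hX (A ∪ T.map e) _ (faceLeg g₀ g) fun _ hu => faceLeg_compat hg hu
  refine ⟨m, ⟨?_, fun v hv => ?_⟩, fun m' ⟨hm'₀, hm'⟩ => hm_uniq m'
    ⟨by rw [← hm'₀, map_homOfLE_comp_assoc], fun _ => map_comp_eq_faceLeg hg hm'₀ hm'⟩⟩
  · refine hX.hom_ext (by rw [map_homOfLE_comp_assoc]; exact hm₀) fun u hu => ?_
    rw [map_homOfLE_comp_assoc, hm u (union_map_mono A e T.empty_subset hu)]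
    exact faceLeg_of_mem g₀ g _ hu
  · refine hX.hom_ext ?_ fun u hu => ?_
    · rw [map_homOfLE_comp_assoc, hm₀, ← hg v hv, map_homOfLE_comp_assoc]
    · have hu' := union_map_mono A e (Finset.singleton_subset_iff.2 hv) hu
      rw [map_homOfLE_comp_assoc, hm u hu', faceLeg_eq hg hu' hv hu]

end Face

section Cartesian

variable {D : Type*} [Category D]

abbrev nonemptyFinset (σ : Type*) : ObjectProperty (Finset σ) := fun T => T.Nonempty

def restrictCone [DecidableEq σ] (A : Finset σ) (e : τ ↪ σ) {G : Finset σ ⥤ D}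
    (c : Cone ((nonemptyFinset σ).ι ⋙ G)) : Cone ((nonemptyFinset τ).ι ⋙ face A e ⋙ G) :=
  c.whisker ((nonemptyFinset σ).lift ((nonemptyFinset τ).ι ⋙ face A e) fun T =>
    (T.property.map (f := e)).mono Finset.subset_union_right)

lemma cone_π_app_comp_map (G : Finset σ ⥤ D) (c : Cone ((nonemptyFinset σ).ι ⋙ G))
    {U V : Finset σ} (hU : U.Nonempty) (hV : V.Nonempty) (hUV : U ⊆ V) :
    c.π.app ⟨U, hU⟩ ≫ G.map (homOfLE hUV) = c.π.app ⟨V, hV⟩ :=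
  c.w (ObjectProperty.homMk (homOfLE hUV) :
    (⟨U, hU⟩ : (nonemptyFinset σ).FullSubcategory) ⟶ ⟨V, hV⟩)

lemma comp_map_eq_π_app_of_exists_ne {S : Type*} [DecidableEq S] {G : Finset S ⥤ D}
    {c : Cone ((nonemptyFinset S).ι ⋙ G)} {s : S} {ℓ : c.pt ⟶ G.obj ∅}
    (hℓ : ∀ (T : Finset {x // x ≠ s}) (hT : T.Nonempty),
      ℓ ≫ G.map (homOfLE (Finset.empty_subset (∅ ∪ T.map (Function.Embedding.subtype _)))) =
        c.π.app ⟨_, (hT.map (f := Function.Embedding.subtype _)).mono Finset.subset_union_right⟩)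
    {U : Finset S} (hU : U.Nonempty) (hs : ∃ x ∈ U, x ≠ s) :
    ℓ ≫ G.map (homOfLE U.empty_subset) = c.π.app ⟨U, hU⟩ := by
  obtain ⟨x, hx, hxs⟩ := hs
  set T := U.subtype (· ≠ s)
  have hT : T.Nonempty := ⟨⟨x, hxs⟩, Finset.mem_subtype.2 hx⟩
  have hsub : ∅ ∪ T.map (Function.Embedding.subtype _) ⊆ U := by simp [T, Finset.subtype_map]
  rw [← map_homOfLE_comp _ (Finset.empty_subset _) hsub, ← Category.assoc, hℓ T hT,
    cone_π_app_comp_map]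

theorem IsCartesianCube.of_faces {S : Type} [Fintype S] [DecidableEq S] {G : Finset S ⥤ D} (s : S)
    (h₀ : IsCartesianCube (face ∅ (Function.Embedding.subtype (· ≠ s)) ⋙ G))
    (h₁ : IsCartesianCube (face {s} (Function.Embedding.subtype (· ≠ s)) ⋙ G)) :
    IsCartesianCube G := by
  set e := Function.Embedding.subtype (· ≠ s)
  obtain ⟨L₀⟩ := h₀
  obtain ⟨L₁⟩ := h₁
  refine ⟨IsLimit.ofExistsUnique fun c => ?_⟩
  -- `(face ∅ e).obj ∅ = ∅ ∪ ∅.map e` reduces to `∅`, so `L₀` has cone point `G.obj ∅`.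
  let ℓ : c.pt ⟶ G.obj ∅ := L₀.lift (restrictCone ∅ e c)
  have hℓ : ∀ (T : Finset {x // x ≠ s}) (hT : T.Nonempty),
      ℓ ≫ G.map (homOfLE (Finset.empty_subset (∅ ∪ T.map e))) =
        c.π.app ⟨_, (hT.map (f := e)).mono Finset.subset_union_right⟩ :=
    fun T hT => L₀.fac (restrictCone ∅ e c) ⟨T, hT⟩
  -- `{s}` lies in no face avoiding `s`; it is the initial vertex of the face containing `s`.
  have fac_face : ℓ ≫ G.map (homOfLE (Finset.empty_subset ({s} ∪ (∅ : Finset _).map e))) =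
      c.π.app ⟨_, (Finset.singleton_nonempty s).mono Finset.subset_union_left⟩ := by
    refine L₁.hom_ext fun ⟨T, ⟨v, hv⟩⟩ => ?_
    change _ ≫ G.map (homOfLE (union_map_mono {s} e T.empty_subset)) = _ ≫ G.map (homOfLE _)
    have hne : ({s} ∪ T.map e).Nonempty :=
      (Finset.singleton_nonempty s).mono Finset.subset_union_left
    rw [Category.assoc, map_homOfLE_comp, cone_π_app_comp_map G c _ hne,
      comp_map_eq_π_app_of_exists_ne hℓ hne
        ⟨e v, Finset.mem_union_right _ (Finset.mem_map_of_mem e hv), v.property⟩]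
  refine ⟨ℓ, fun ⟨U, hU⟩ => ?_, fun m hm => L₀.hom_ext fun ⟨T, hT⟩ => ?_⟩
  · by_cases hs : ∃ x ∈ U, x ≠ s
    · exact comp_map_eq_π_app_of_exists_ne hℓ hU hs
    · push Not at hs
      have hsub : {s} ∪ (∅ : Finset _).map e ⊆ U := by
        obtain ⟨y, hy⟩ := hU
        simpa [← hs y hy] using hy
      change ℓ ≫ G.map (homOfLE U.empty_subset) = c.π.app ⟨U, hU⟩
      rw [← map_homOfLE_comp _ (Finset.empty_subset _) hsub, ← Category.assoc, fac_face,
        cone_π_app_comp_map]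
  · exact (hm _).trans (hℓ T hT).symm

end Cartesian

end FinsetCube

open FinsetCube

theorem stmt14_general {C : Type*} [Category C] {D : Type*} [Category D]
    [HasPushouts C]
    (n : ℕ) (F : C ⥤ D)
    (h : ∀ (S : Type) [Fintype S] [DecidableEq S], Fintype.card S = n + 1 →
      ∀ X : Finset S ⥤ C, IsStronglyCocartesianCube X → IsCartesianCube (X ⋙ F)) :
    ∀ (S : Type) [Fintype S] [DecidableEq S], Fintype.card S = n + 2 →
      ∀ X : Finset S ⥤ C, IsStronglyCocartesianCube X → IsCartesianCube (X ⋙ F) := by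
  intro S _ _ hS X hX
  obtain ⟨s⟩ : Nonempty S := Fintype.card_pos_iff.1 (by omega)
  have hcard : Fintype.card {x // x ≠ s} = n + 1 := by
    simp [Fintype.card_subtype_compl, hS]
  have hX' := hX.isWidePushoutCube
  exact IsCartesianCube.of_faces s
    (h _ hcard _ (hX'.comp_face ∅ _).isStronglyCocartesianCube)
    (h _ hcard _ (hX'.comp_face {s} _).isStronglyCocartesianCube)

/-- Every `n`-excisive functor is `(n+1)`-excisive: if `F` sends strongly cocartesian
`(n+1)`-cubes to cartesian `(n+1)`-cubes, it sends strongly cocartesian `(n+2)`-cubes to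
cartesian `(n+2)`-cubes. -/
theorem stmt14 {C : Type*} [Category C] {D : Type*} [Category D]
    [HasPushouts C] [HasTerminal C] [HasPullbacks D]
    (n : ℕ) (F : C ⥤ D)
    (h : ∀ (S : Type) [Fintype S] [DecidableEq S], Fintype.card S = n + 1 →
      ∀ X : Finset S ⥤ C, IsStronglyCocartesianCube X → IsCartesianCube (X ⋙ F)) :
    ∀ (S : Type) [Fintype S] [DecidableEq S], Fintype.card S = n + 2 →
      ∀ X : Finset S ⥤ C, IsStronglyCocartesianCube X → IsCartesianCube (X ⋙ F) :=
  stmt14_general n F h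
end
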